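/- arXiv:2601.00801 — 3 statements merged into one kernel-verified Lean document; each statement's English description precedes it below -/
import Mathlib

section
/- Let p ∈ [1,∞), n ≥ 2, h = (g₁∘⋯∘g_n)' on an interval I, and f of bounded p-variation on (g₁∘⋯∘g_n)(I). Then ‖(f ∘ (g₁∘⋯∘g_n))·h‖_{𝒱_p(I)} ≤ 2^{n/p} ‖f‖_{𝒱_p((g₁∘⋯∘g_n)(I))} · ‖g_n'‖_{𝒱_p(I)} · ∏_{k=1}^{n-1} ‖g_k'‖_{𝒱_p((g_{k+1}∘⋯∘g_n)(I))}. -/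
open Set Finset MeasureTheory Real

noncomputable section

/-- Set of p-variation partition sums of `f` over `I`. -/
def varSums (p : ℝ) (f : ℝ → ℝ) (I : Set ℝ) : Set ℝ :=
  {S | ∃ (N : ℕ) (t : ℕ → ℝ), (∀ k ≤ N, t k ∈ I) ∧ (∀ k < N, t k < t (k + 1)) ∧
    S = (∑ k ∈ Finset.range N, |f (t (k + 1)) - f (t k)| ^ p) ^ (1 / p)}

/-- The p-variation `ν_p(f, I)`. -/
def nuVar (p : ℝ) (f : ℝ → ℝ) (I : Set ℝ) : ℝ := sSup (varSums p f I)

/-- `sup_I |f|`. -/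
def supAbs (f : ℝ → ℝ) (I : Set ℝ) : ℝ := sSup ((fun x => |f x|) '' I)

/-- The norm of the space `𝒱_p(I)`. -/
def vNorm (p : ℝ) (f : ℝ → ℝ) (I : Set ℝ) : ℝ := supAbs f I + nuVar p f I

/-- The composition `g i ∘ g (i+1) ∘ ⋯ ∘ g n` (identity if `i > n`). -/
def compIco (g : ℕ → ℝ → ℝ) (i n : ℕ) : ℝ → ℝ :=
  ((List.Ico i (n + 1)).map g).foldr (· ∘ ·) id

namespace Stmt14

variable {p : ℝ}

lemma ppos (hp : 1 ≤ p) : 0 < p := lt_of_lt_of_le one_pos hp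
lemma pne (hp : 1 ≤ p) : p ≠ 0 := (ppos hp).ne'

lemma rpow_rpow_inv (hp : 1 ≤ p) {x : ℝ} (hx : 0 ≤ x) : (x ^ p) ^ (1/p) = x := by
  rw [← Real.rpow_mul hx, mul_one_div_cancel (pne hp), Real.rpow_one]

lemma rpow_inv_rpow (hp : 1 ≤ p) {x : ℝ} (hx : 0 ≤ x) : (x ^ (1/p)) ^ p = x := by
  rw [← Real.rpow_mul hx, one_div_mul_cancel (pne hp), Real.rpow_one]

lemma mem_varSums {f : ℝ → ℝ} {I : Set ℝ} {N : ℕ} {t : ℕ → ℝ}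
    (h1 : ∀ k ≤ N, t k ∈ I) (h2 : ∀ k < N, t k < t (k + 1)) :
    (∑ k ∈ Finset.range N, |f (t (k + 1)) - f (t k)| ^ p) ^ (1 / p) ∈ varSums p f I :=
  ⟨N, t, h1, h2, rfl⟩

lemma varSums_nonneg {f : ℝ → ℝ} {I : Set ℝ} : ∀ S ∈ varSums p f I, 0 ≤ S := by
  rintro S ⟨N, t, h1, h2, rfl⟩
  exact Real.rpow_nonneg (Finset.sum_nonneg fun k _ => Real.rpow_nonneg (abs_nonneg _) _) _

lemma nuVar_nonneg {f : ℝ → ℝ} {I : Set ℝ} : 0 ≤ nuVar p f I :=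
  Real.sSup_nonneg varSums_nonneg

lemma supAbs_nonneg {f : ℝ → ℝ} {I : Set ℝ} : 0 ≤ supAbs f I :=
  Real.sSup_nonneg (by rintro x ⟨y, hy, rfl⟩; exact abs_nonneg _)

lemma vNorm_nonneg {f : ℝ → ℝ} {I : Set ℝ} : 0 ≤ vNorm p f I :=
  add_nonneg supAbs_nonneg nuVar_nonneg

lemma sum_le_nuVar_pow (hp : 1 ≤ p) {f : ℝ → ℝ} {I : Set ℝ}
    (hf : BddAbove (varSums p f I)) {N : ℕ} {t : ℕ → ℝ}
    (h1 : ∀ k ≤ N, t k ∈ I) (h2 : ∀ k < N, t k < t (k + 1)) :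
    ∑ k ∈ Finset.range N, |f (t (k + 1)) - f (t k)| ^ p ≤ (nuVar p f I) ^ p := by
  have hs : (0:ℝ) ≤ ∑ k ∈ Finset.range N, |f (t (k + 1)) - f (t k)| ^ p :=
    Finset.sum_nonneg fun k _ => Real.rpow_nonneg (abs_nonneg _) _
  have h := le_csSup hf (mem_varSums (p := p) h1 h2)
  calc ∑ k ∈ Finset.range N, |f (t (k + 1)) - f (t k)| ^ p
      = ((∑ k ∈ Finset.range N, |f (t (k + 1)) - f (t k)| ^ p) ^ (1/p)) ^ p :=
        (rpow_inv_rpow hp hs).symm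
    _ ≤ (nuVar p f I) ^ p :=
        Real.rpow_le_rpow (Real.rpow_nonneg hs _) h (le_of_lt (ppos hp))

lemma abs_sub_le_nuVar (hp : 1 ≤ p) {f : ℝ → ℝ} {I : Set ℝ}
    (hf : BddAbove (varSums p f I)) {x y : ℝ} (hx : x ∈ I) (hy : y ∈ I) :
    |f x - f y| ≤ nuVar p f I := by
  have key : ∀ a b : ℝ, a ∈ I → b ∈ I → a < b → |f b - f a| ≤ nuVar p f I := by
    intro a b ha hb hab
    have hmem := mem_varSums (p := p) (f := f) (N := 1) (t := fun k => if k = 0 then a else b)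
      (by intro k hk; interval_cases k <;> simpa) (by intro k hk; interval_cases k <;> simpa)
    simp only [Finset.sum_range_one, Nat.add_one_ne_zero, if_false, if_true, if_pos rfl,
      show (0+1 ≠ 0) from by omega, reduceIte] at hmem
    have : (|f b - f a| ^ p) ^ (1/p) = |f b - f a| := rpow_rpow_inv hp (abs_nonneg _)
    have h2 := le_csSup hf hmem
    rwa [this] at h2
  rcases lt_trichotomy x y with h | h | h
  · rw [abs_sub_comm]; exact key x y hx hy h
  · simp [h, nuVar_nonneg]
  · exact key y x hy hx h

lemma bddAbove_absImage (hp : 1 ≤ p) {f : ℝ → ℝ} {I : Set ℝ}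
    (hf : BddAbove (varSums p f I)) : BddAbove ((fun x => |f x|) '' I) := by
  rcases I.eq_empty_or_nonempty with rfl | ⟨x₀, hx₀⟩
  · simp
  · refine ⟨|f x₀| + nuVar p f I, ?_⟩
    rintro v ⟨x, hx, rfl⟩
    calc |f x| = |f x₀ + (f x - f x₀)| := by ring_nf
      _ ≤ |f x₀| + |f x - f x₀| := abs_add_le _ _
      _ ≤ |f x₀| + nuVar p f I := by
          have := abs_sub_le_nuVar hp hf hx hx₀; linarith

lemma abs_le_supAbs (hp : 1 ≤ p) {f : ℝ → ℝ} {I : Set ℝ}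
    (hf : BddAbove (varSums p f I)) {x : ℝ} (hx : x ∈ I) : |f x| ≤ supAbs f I :=
  le_csSup (bddAbove_absImage hp hf) ⟨x, hx, rfl⟩

end Stmt14
namespace Stmt14

variable {p : ℝ}

/-- Sum of `|φ b - φ a| ^ p` over consecutive pairs of a list. -/
def pairSum (p : ℝ) (φ : ℝ → ℝ) : List ℝ → ℝ
  | [] => 0
  | [_] => 0
  | a :: b :: l => |φ b - φ a| ^ p + pairSum p φ (b :: l)

lemma pairSum_nil (φ : ℝ → ℝ) : pairSum p φ [] = 0 := rfl
lemma pairSum_singleton (φ : ℝ → ℝ) (a : ℝ) : pairSum p φ [a] = 0 := rfl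
lemma pairSum_cons_cons (φ : ℝ → ℝ) (a b : ℝ) (l : List ℝ) :
    pairSum p φ (a :: b :: l) = |φ b - φ a| ^ p + pairSum p φ (b :: l) := rfl

lemma pairSum_nonneg (φ : ℝ → ℝ) : ∀ L : List ℝ, 0 ≤ pairSum p φ L
  | [] => le_refl 0
  | [_] => le_refl 0
  | a :: b :: l => add_nonneg (Real.rpow_nonneg (abs_nonneg _) _) (pairSum_nonneg φ (b :: l))

lemma pairSum_map_range (φ : ℝ → ℝ) :
    ∀ (M : ℕ) (w : ℕ → ℝ), pairSum p φ ((List.range (M+1)).map w)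
      = ∑ k ∈ Finset.range M, |φ (w (k+1)) - φ (w k)| ^ p := by
  intro M
  induction M with
  | zero => intro w; simp [List.range_succ, pairSum]
  | succ M IH =>
    intro w
    have e1 : (List.range (M+2)).map w
        = w 0 :: (List.range (M+1)).map (w ∘ Nat.succ) := by
      rw [List.range_succ_eq_map, List.map_cons, List.map_map]
    have e2 : (List.range (M+1)).map (w ∘ Nat.succ)
        = (w ∘ Nat.succ) 0 :: (List.range M).map ((w ∘ Nat.succ) ∘ Nat.succ) := by
      rw [List.range_succ_eq_map, List.map_cons, List.map_map]
    have e3 : (w ∘ Nat.succ) 0 :: (List.range M).map ((w ∘ Nat.succ) ∘ Nat.succ)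
        = (List.range (M+1)).map (w ∘ Nat.succ) := e2.symm
    rw [e1, e2, pairSum_cons_cons, e3, IH (w ∘ Nat.succ)]
    rw [Finset.sum_range_succ' (fun k => |φ (w (k+1)) - φ (w k)| ^ p) M]
    simp only [Function.comp, Nat.succ_eq_add_one]
    ring

lemma map_range_getD : ∀ L : List ℝ, (List.range L.length).map (fun k => L.getD k 0) = L := by
  intro L
  induction L with
  | nil => simp
  | cons a L IH =>
    rw [List.length_cons, List.range_succ_eq_map, List.map_cons, List.map_map]
    simp only [List.getD_cons_zero]
    have he : ((fun k => (a :: L).getD k 0) ∘ Nat.succ) = fun k => L.getD k 0 := by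
      funext k; simp
    rw [he, IH]

lemma chain'_lt_getD {L : List ℝ} (hc : L.Chain' (· < ·)) {k : ℕ} (hk : k + 1 < L.length) :
    L.getD k 0 < L.getD (k+1) 0 := by
  have hpw := List.pairwise_iff_getElem.1 (List.isChain_iff_pairwise.1 hc)
  have h1 : L.getD k 0 = L[k]'(by omega) := List.getD_eq_getElem L 0 (by omega)
  have h2 : L.getD (k+1) 0 = L[k+1]'hk := List.getD_eq_getElem L 0 hk
  rw [h1, h2]
  exact hpw k (k+1) (by omega) hk (by omega)

lemma pairSum_le_nuVar_pow (hp : 1 ≤ p) {φ : ℝ → ℝ} {S : Set ℝ}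
    (hφ : BddAbove (varSums p φ S)) :
    ∀ L : List ℝ, L.Chain' (· < ·) → (∀ x ∈ L, x ∈ S) →
      pairSum p φ L ≤ (nuVar p φ S) ^ p := by
  have hnn : (0:ℝ) ≤ (nuVar p φ S) ^ p := Real.rpow_nonneg nuVar_nonneg _
  rintro (_ | ⟨a, _ | ⟨b, l⟩⟩) hc hmem
  · simpa [pairSum_nil] using hnn
  · simpa [pairSum_singleton] using hnn
  · have hconv := pairSum_map_range (p := p) φ (l.length + 1) (fun k => (a :: b :: l).getD k 0)
    rw [show l.length + 1 + 1 = (a :: b :: l).length from by simp] at hconv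
    rw [map_range_getD (a :: b :: l)] at hconv
    rw [hconv]
    refine sum_le_nuVar_pow hp hφ (N := l.length + 1)
      (t := fun k => (a :: b :: l).getD k 0) ?_ ?_
    · intro k hk
      apply hmem
      have hklt : k < (a :: b :: l).length := by simp; omega
      show (a :: b :: l).getD k 0 ∈ a :: b :: l
      rw [List.getD_eq_getElem _ 0 hklt]
      exact List.getElem_mem _
    · intro k hk
      exact chain'_lt_getD hc (by simp; omega)

lemma destutter'_head : ∀ (l : List ℝ) (a : ℝ), ∃ tl, l.destutter' (· < ·) a = a :: tl := by
  intro l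
  induction l with
  | nil => intro a; exact ⟨[], rfl⟩
  | cons b l IH =>
    intro a
    rw [List.destutter'_cons]
    by_cases h : a < b
    · simp only [if_pos h]; exact ⟨_, rfl⟩
    · simp only [if_neg h]; exact IH a

lemma pairSum_destutter' (hp : 1 ≤ p) (φ : ℝ → ℝ) :
    ∀ (l : List ℝ) (a : ℝ), l.Chain (· ≤ ·) a →
      pairSum p φ (a :: l) = pairSum p φ (l.destutter' (· < ·) a) := by
  intro l
  induction l with
  | nil => intro a _; rfl
  | cons b l IH =>
    intro a hc
    replace hc := List.isChain_cons_cons.1 hc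
    obtain ⟨hab, hc⟩ := hc
    rw [List.destutter'_cons]
    by_cases h : a < b
    · rw [if_pos h, pairSum_cons_cons]
      obtain ⟨tl, htl⟩ := destutter'_head l b
      rw [IH b hc, htl, pairSum_cons_cons]
    · rw [if_neg h]
      have hab' : a = b := le_antisymm hab (not_lt.1 h)
      rw [pairSum_cons_cons]
      subst hab'
      rw [IH a hc]
      simp [Real.zero_rpow (pne hp)]

lemma pairSum_chain_le (hp : 1 ≤ p) {φ : ℝ → ℝ} {S : Set ℝ}
    (hφ : BddAbove (varSums p φ S)) (L : List ℝ) (hc : L.Chain' (· ≤ ·))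
    (hmem : ∀ x ∈ L, x ∈ S) : pairSum p φ L ≤ (nuVar p φ S) ^ p := by
  cases L with
  | nil => simpa [pairSum_nil] using Real.rpow_nonneg (nuVar_nonneg (p := p) (f := φ) (I := S)) p
  | cons a l =>
    have hch : l.Chain (· ≤ ·) a := hc
    rw [show pairSum p φ (a :: l) = pairSum p φ ((a :: l).destutter (· < ·)) by
      rw [List.destutter_cons']; exact pairSum_destutter' hp φ l a hch]
    apply pairSum_le_nuVar_pow hp hφ
    · exact List.isChain_destutter _ _
    · intro x hx
      exact hmem x (List.Sublist.subset (List.destutter_sublist _ _) hx)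

/-- Sums of `|φ (w (k+1)) - φ (w k)|^p` over a weakly monotone `w` are bounded by `ν_p^p`. -/
lemma weak_mono_sum_le (hp : 1 ≤ p) {φ : ℝ → ℝ} {S : Set ℝ}
    (hφ : BddAbove (varSums p φ S)) (w : ℕ → ℝ) (M : ℕ)
    (hmono : ∀ k < M, w k ≤ w (k+1)) (hmem : ∀ k ≤ M, w k ∈ S) :
    ∑ k ∈ Finset.range M, |φ (w (k+1)) - φ (w k)| ^ p ≤ (nuVar p φ S) ^ p := by
  rw [← pairSum_map_range]
  apply pairSum_chain_le hp hφ
  · show List.IsChain _ _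
    rw [List.isChain_map]
    rw [List.isChain_range_succ]
    exact hmono
  · intro x hx
    rw [List.mem_map] at hx
    obtain ⟨k, hk, rfl⟩ := hx
    rw [List.mem_range] at hk
    exact hmem k (by omega)

lemma weak_anti_sum_le (hp : 1 ≤ p) {φ : ℝ → ℝ} {S : Set ℝ}
    (hφ : BddAbove (varSums p φ S)) (w : ℕ → ℝ) (M : ℕ)
    (hmono : ∀ k < M, w (k+1) ≤ w k) (hmem : ∀ k ≤ M, w k ∈ S) :
    ∑ k ∈ Finset.range M, |φ (w (k+1)) - φ (w k)| ^ p ≤ (nuVar p φ S) ^ p := by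
  have hrefl := Finset.sum_range_reflect (fun k => |φ (w (k+1)) - φ (w k)| ^ p) M
  rw [← hrefl]
  have key := weak_mono_sum_le hp hφ (fun i => w (M - i)) M
    (fun k hk => by
      have := hmono (M - k - 1) (by omega)
      have e1 : M - k - 1 + 1 = M - k := by omega
      have e2 : M - k - 1 = M - (k + 1) := by omega
      rw [e1, e2] at this
      simpa using this)
    (fun k _ => hmem (M - k) (by omega))
  refine le_trans (le_of_eq ?_) key
  apply Finset.sum_congr rfl
  intro j hj
  rw [Finset.mem_range] at hj
  have h1 : M - 1 - j + 1 = M - j := by omega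
  have h2 : M - 1 - j = M - (j+1) := by omega
  rw [h1, h2, abs_sub_comm]

end Stmt14
namespace Stmt14

variable {p : ℝ}

lemma chain'_toList (z : Option ℝ) : (z.toList ++ ([] : List ℝ)).Chain' (· < ·) := by
  cases z <;> simp [List.Chain']

lemma pairSum_toList (φ : ℝ → ℝ) (z : Option ℝ) : pairSum p φ (z.toList ++ ([] : List ℝ)) = 0 := by
  cases z <;> simp [pairSum_nil, pairSum_singleton]

/-- Easy output for the run induction: empty chains. -/
lemma ind_easy (g f : ℝ → ℝ) (I : Set ℝ) {s : ℝ}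
    (hs : s ≤ (nuVar p f (g '' I)) ^ p * (supAbs (deriv g) I) ^ p) (z₁ z₂ : Option ℝ) :
    ∃ L₁ L₂ : List ℝ,
      (z₁.toList ++ L₁).Chain' (· < ·) ∧ (∀ x ∈ L₁, x ∈ I) ∧
      (z₂.toList ++ L₂).Chain' (· < ·) ∧ (∀ x ∈ L₂, x ∈ I) ∧
      s ≤ (nuVar p f (g '' I)) ^ p * (supAbs (deriv g) I) ^ p
        + (nuVar p f (g '' I)) ^ p * pairSum p (deriv g) (z₁.toList ++ L₁)
        + (nuVar p f (g '' I)) ^ p * pairSum p (deriv g) (z₂.toList ++ L₂) := by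
  refine ⟨[], [], chain'_toList z₁, by simp, chain'_toList z₂, by simp, ?_⟩
  rw [pairSum_toList, pairSum_toList, mul_zero, add_zero, add_zero]
  exact hs

lemma t_mono {N : ℕ} {t : ℕ → ℝ} (htlt : ∀ k < N, t k < t (k + 1)) :
    ∀ k l, k ≤ l → l ≤ N → t k ≤ t l := by
  intro k l hkl hlN
  obtain ⟨d, rfl⟩ := Nat.exists_eq_add_of_le hkl
  clear hkl
  induction d with
  | zero => simp
  | succ d IHd =>
    have h1 : t k ≤ t (k + d) := IHd (by omega)
    have h2 : t (k + d) < t (k + d + 1) := htlt _ (by omega)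
    calc t k ≤ t (k+d) := h1
      _ ≤ t (k + (d+1)) := by rw [show k + (d+1) = k + d + 1 from rfl]; exact h2.le

end Stmt14
namespace Stmt14

variable {p : ℝ}

set_option maxHeartbeats 2000000 in
/-- The run-decomposition induction. `z₁` is the chain frontier for increasing runs,
`z₂` for decreasing runs. -/
lemma ind (hp : 1 ≤ p) (I : Set ℝ) (hI : I.OrdConnected)
    (g f : ℝ → ℝ) (hg : Differentiable ℝ g)
    (hfb : BddAbove (varSums p f (g '' I))) (hgb : BddAbove (varSums p (deriv g) I))
    (N : ℕ) (t : ℕ → ℝ) (htI : ∀ k ≤ N, t k ∈ I) (htlt : ∀ k < N, t k < t (k + 1)) :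
    ∀ (F a : ℕ), N - a ≤ F → ∀ z₁ z₂ : Option ℝ,
      (∀ v, z₁ = some v → v ∈ I ∧ deriv g v = 0 ∧
        (v < t a ∨ (a < N ∧ g (t (a+1)) < g (t a) ∧ v < t (a+1)))) →
      (∀ v, z₂ = some v → v ∈ I ∧ deriv g v = 0 ∧
        (v < t a ∨ (a < N ∧ g (t a) < g (t (a+1)) ∧ v < t (a+1)))) →
      ∃ L₁ L₂ : List ℝ,
        (z₁.toList ++ L₁).Chain' (· < ·) ∧ (∀ x ∈ L₁, x ∈ I) ∧
        (z₂.toList ++ L₂).Chain' (· < ·) ∧ (∀ x ∈ L₂, x ∈ I) ∧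
        ∑ k ∈ Finset.Ico a N, |f (g (t (k+1))) - f (g (t k))| ^ p * |deriv g (t k)| ^ p ≤
          (nuVar p f (g '' I)) ^ p * (supAbs (deriv g) I) ^ p
          + (nuVar p f (g '' I)) ^ p * pairSum p (deriv g) (z₁.toList ++ L₁)
          + (nuVar p f (g '' I)) ^ p * pairSum p (deriv g) (z₂.toList ++ L₂) := by
  have hAV : (0:ℝ) ≤ (nuVar p f (g '' I)) ^ p := Real.rpow_nonneg nuVar_nonneg _
  have hBB : (0:ℝ) ≤ (supAbs (deriv g) I) ^ p := Real.rpow_nonneg supAbs_nonneg _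
  intro F
  induction F with
  | zero =>
    intro a ha z₁ z₂ _ _
    have hIco : Finset.Ico a N = ∅ := Finset.Ico_eq_empty (by omega)
    refine ind_easy g f I ?_ z₁ z₂
    rw [hIco, Finset.sum_empty]
    exact mul_nonneg hAV hBB
  | succ F IH =>
    intro a ha z₁ z₂ hz₁ hz₂
    by_cases haN : N ≤ a
    · have hIco : Finset.Ico a N = ∅ := Finset.Ico_eq_empty (by omega)
      refine ind_easy g f I ?_ z₁ z₂
      rw [hIco, Finset.sum_empty]
      exact mul_nonneg hAV hBB
    push_neg at haN
    by_cases hSV : (Finset.Ico a N).filter (fun k => g (t (k+1)) ≠ g (t k)) = ∅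
    · refine ind_easy g f I ?_ z₁ z₂
      have hzero : ∀ k ∈ Finset.Ico a N,
          |f (g (t (k+1))) - f (g (t k))| ^ p * |deriv g (t k)| ^ p = 0 := by
        intro k hk
        have he : g (t (k+1)) = g (t k) := by
          by_contra hne
          have hmem : k ∈ (Finset.Ico a N).filter (fun k => g (t (k+1)) ≠ g (t k)) :=
            Finset.mem_filter.2 ⟨hk, hne⟩
          exact absurd hmem (by simp [hSV])
        rw [he, sub_self, abs_zero, Real.zero_rpow (pne hp), zero_mul]
      rw [Finset.sum_eq_zero hzero]
      exact mul_nonneg hAV hBB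
    have hSVne : ((Finset.Ico a N).filter (fun k => g (t (k+1)) ≠ g (t k))).Nonempty :=
      Finset.nonempty_iff_ne_empty.2 hSV
    obtain ⟨K₁, hK₁mem, hK₁min'⟩ := Finset.exists_min_image
      ((Finset.Ico a N).filter (fun k => g (t (k+1)) ≠ g (t k))) id hSVne
    rw [Finset.mem_filter, Finset.mem_Ico] at hK₁mem
    obtain ⟨⟨hK₁a, hK₁N⟩, hK₁ne⟩ := hK₁mem
    have hK₁min : ∀ k, a ≤ k → k < N → g (t (k+1)) ≠ g (t k) → K₁ ≤ k := by
      intro k h1 h2 h3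
      exact hK₁min' k (Finset.mem_filter.2 ⟨Finset.mem_Ico.2 ⟨h1, h2⟩, h3⟩)
    rcases hK₁ne.lt_or_gt with hd | hd
    -- ================= DECREASING RUN : g (t (K₁+1)) < g (t K₁) ====================
    · by_cases hSV₂ : (Finset.Ico a N).filter (fun k => g (t k) < g (t (k+1))) = ∅
      · -- last run (whole suffix weakly decreasing)
        refine ind_easy g f I ?_ z₁ z₂
        have hweak : ∀ k, a ≤ k → k < N → g (t (k+1)) ≤ g (t k) := by
          intro k h1 h2
          by_contra hlt
          push_neg at hlt
          have hmem : k ∈ (Finset.Ico a N).filter (fun k => g (t k) < g (t (k+1))) :=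
            Finset.mem_filter.2 ⟨Finset.mem_Ico.2 ⟨h1, h2⟩, hlt⟩
          exact absurd hmem (by simp [hSV₂])
        calc ∑ k ∈ Finset.Ico a N, |f (g (t (k+1))) - f (g (t k))| ^ p * |deriv g (t k)| ^ p
            ≤ ∑ k ∈ Finset.Ico a N,
                |f (g (t (k+1))) - f (g (t k))| ^ p * (supAbs (deriv g) I) ^ p := by
              apply Finset.sum_le_sum
              intro k hk
              rw [Finset.mem_Ico] at hk
              exact mul_le_mul_of_nonneg_left
                (Real.rpow_le_rpow (abs_nonneg _)
                  (abs_le_supAbs hp hgb (htI k (by omega))) (ppos hp).le)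
                (Real.rpow_nonneg (abs_nonneg _) _)
          _ = (∑ k ∈ Finset.Ico a N, |f (g (t (k+1))) - f (g (t k))| ^ p)
                * (supAbs (deriv g) I) ^ p := by rw [Finset.sum_mul]
          _ ≤ (nuVar p f (g '' I)) ^ p * (supAbs (deriv g) I) ^ p := by
              apply mul_le_mul_of_nonneg_right _ hBB
              rw [Finset.sum_Ico_eq_sum_range]
              exact weak_anti_sum_le hp hfb (fun i => g (t (a + i))) (N - a)
                (fun k hk => hweak (a + k) (by omega) (by omega))
                (fun k _ => ⟨t (a + k), htI _ (by omega), rfl⟩)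
      · have hSV₂ne : ((Finset.Ico a N).filter (fun k => g (t k) < g (t (k+1)))).Nonempty :=
          Finset.nonempty_iff_ne_empty.2 hSV₂
        obtain ⟨j, hjmem, hjmin'⟩ := Finset.exists_min_image
          ((Finset.Ico a N).filter (fun k => g (t k) < g (t (k+1)))) id hSV₂ne
        rw [Finset.mem_filter, Finset.mem_Ico] at hjmem
        obtain ⟨⟨hja, hjN⟩, hjd⟩ := hjmem
        have hjmin : ∀ k, a ≤ k → k < N → g (t k) < g (t (k+1)) → j ≤ k := by
          intro k h1 h2 h3
          exact hjmin' k (Finset.mem_filter.2 ⟨Finset.mem_Ico.2 ⟨h1, h2⟩, h3⟩)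
        have hK₁j : K₁ < j := by
          have hle : K₁ ≤ j := hK₁min j hja hjN hjd.ne'
          rcases hle.lt_or_eq with h | h
          · exact h
          · subst h
            exact absurd hjd (lt_asymm hd)
        have hweakj : ∀ k, a ≤ k → k < j → g (t (k+1)) ≤ g (t k) := by
          intro k h1 h2
          by_contra hlt
          push_neg at hlt
          exact absurd (hjmin k h1 (by omega) hlt) (by omega)
        have hK₁SV₁ : K₁ ∈ (Finset.Ico a j).filter (fun k => g (t (k+1)) < g (t k)) :=
          Finset.mem_filter.2 ⟨Finset.mem_Ico.2 ⟨hK₁a, hK₁j⟩, hd⟩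
        obtain ⟨m, hmSV₁, hmax⟩ := Finset.exists_max_image
          ((Finset.Ico a j).filter (fun k => g (t (k+1)) < g (t k)))
          (fun k => |deriv g (t k)|) ⟨K₁, hK₁SV₁⟩
        rw [Finset.mem_filter, Finset.mem_Ico] at hmSV₁
        obtain ⟨⟨hma, hmj⟩, hmd⟩ := hmSV₁
        have hmN : m < N := by omega
        have hrun : ∑ k ∈ Finset.Ico a j, |f (g (t (k+1))) - f (g (t k))| ^ p
              * |deriv g (t k)| ^ p
            ≤ (nuVar p f (g '' I)) ^ p * |deriv g (t m)| ^ p := by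
          calc ∑ k ∈ Finset.Ico a j, |f (g (t (k+1))) - f (g (t k))| ^ p * |deriv g (t k)| ^ p
              ≤ ∑ k ∈ Finset.Ico a j,
                  |f (g (t (k+1))) - f (g (t k))| ^ p * |deriv g (t m)| ^ p := by
                apply Finset.sum_le_sum
                intro k hk
                rw [Finset.mem_Ico] at hk
                by_cases he : g (t (k+1)) = g (t k)
                · rw [he, sub_self, abs_zero, Real.zero_rpow (pne hp), zero_mul, zero_mul]
                · have hklt : g (t (k+1)) < g (t k) :=
                    lt_of_le_of_ne (hweakj k hk.1 hk.2) he
                  have hkmem : k ∈ (Finset.Ico a j).filter (fun k => g (t (k+1)) < g (t k)) :=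
                    Finset.mem_filter.2 ⟨Finset.mem_Ico.2 hk, hklt⟩
                  exact mul_le_mul_of_nonneg_left
                    (Real.rpow_le_rpow (abs_nonneg _) (hmax k hkmem) (ppos hp).le)
                    (Real.rpow_nonneg (abs_nonneg _) _)
            _ = (∑ k ∈ Finset.Ico a j, |f (g (t (k+1))) - f (g (t k))| ^ p)
                  * |deriv g (t m)| ^ p := by rw [Finset.sum_mul]
            _ ≤ (nuVar p f (g '' I)) ^ p * |deriv g (t m)| ^ p := by
                apply mul_le_mul_of_nonneg_right _ (Real.rpow_nonneg (abs_nonneg _) _)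
                rw [Finset.sum_Ico_eq_sum_range]
                exact weak_anti_sum_le hp hfb (fun i => g (t (a + i))) (j - a)
                  (fun k hk => hweakj (a + k) (by omega) (by omega))
                  (fun k _ => ⟨t (a + k), htI _ (by omega), rfl⟩)
        obtain ⟨ξm, hξmIoo, hξmval⟩ :=
          exists_deriv_eq_slope g (htlt m hmN) hg.continuous.continuousOn hg.differentiableOn
        have hξmneg : deriv g ξm < 0 := by
          rw [hξmval]
          exact div_neg_of_neg_of_pos (sub_neg.2 hmd) (sub_pos.2 (htlt m hmN))
        obtain ⟨ξj, hξjIoo, hξjval⟩ :=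
          exists_deriv_eq_slope g (htlt j hjN) hg.continuous.continuousOn hg.differentiableOn
        have hξjpos : 0 < deriv g ξj := by
          rw [hξjval]
          exact div_pos (sub_pos.2 hjd) (sub_pos.2 (htlt j hjN))
        have hξmξj : ξm < ξj :=
          lt_of_lt_of_le hξmIoo.2
            (le_trans (t_mono htlt (m+1) j (by omega) (by omega)) hξjIoo.1.le)
        obtain ⟨ζ, hζIoo, hζ0⟩ := exists_hasDerivWithinAt_eq_of_gt_of_lt hξmξj.le
          (fun x _ => (hg x).hasDerivAt.hasDerivWithinAt) hξmneg hξjpos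
        have hζtm : t m < ζ := lt_trans hξmIoo.1 hζIoo.1
        have hζtj1 : ζ < t (j+1) := lt_trans hζIoo.2 hξjIoo.2
        have hζI : ζ ∈ I :=
          hI.out (htI m (by omega)) (htI (j+1) (by omega)) ⟨hζtm.le, hζtj1.le⟩
        obtain ⟨L₁', L₂', hch₁', hmem₁', hch₂', hmem₂', hbound'⟩ :=
          IH j (by omega) z₁ (some ζ)
            (by
              intro v hv
              obtain ⟨hvI, hv0, hvpos⟩ := hz₁ v hv
              refine ⟨hvI, hv0, Or.inl ?_⟩
              rcases hvpos with h | ⟨_, hsig, hvlt⟩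
              · exact lt_of_lt_of_le h (t_mono htlt a j (by omega) (by omega))
              · have haK : K₁ ≤ a := hK₁min a le_rfl haN hsig.ne
                exact lt_of_lt_of_le hvlt (t_mono htlt (a+1) j (by omega) (by omega)))
            (by
              intro v hv
              obtain rfl : ζ = v := by injection hv
              exact ⟨hζI, hζ0, Or.inr ⟨hjN, hjd, hζtj1⟩⟩)
        have hchζ : (ζ :: L₂').Chain' (· < ·) := by simpa using hch₂'
        have hvtm : ∀ v, z₂ = some v → v < t m := by
          intro v hv
          obtain ⟨hvI, hv0, hvpos⟩ := hz₂ v hv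
          rcases hvpos with h | ⟨_, hsig, _⟩
          · exact lt_of_lt_of_le h (t_mono htlt a m (by omega) (by omega))
          · exact absurd (hjmin a le_rfl haN hsig) (by omega)
        refine ⟨L₁', t m :: ζ :: L₂', hch₁', hmem₁', ?_, ?_, ?_⟩
        · cases z₂ with
          | none =>
            simp only [Option.toList_none, List.nil_append]
            exact List.isChain_cons_cons.2 ⟨hζtm, hchζ⟩
          | some v =>
            simp only [Option.toList_some, List.singleton_append]
            exact List.isChain_cons_cons.2 ⟨hvtm v rfl,
              List.isChain_cons_cons.2 ⟨hζtm, hchζ⟩⟩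
        · intro x hx
          rcases List.mem_cons.1 hx with rfl | hx
          · exact htI m (by omega)
          rcases List.mem_cons.1 hx with rfl | hx
          · exact hζI
          · exact hmem₂' x hx
        · have hsplit := Finset.sum_Ico_consecutive
            (f := fun k => |f (g (t (k+1))) - f (g (t k))| ^ p * |deriv g (t k)| ^ p)
            (show a ≤ j by omega) (show j ≤ N by omega)
          rw [← hsplit]
          have hbound'' : ∑ k ∈ Finset.Ico j N,
              |f (g (t (k+1))) - f (g (t k))| ^ p * |deriv g (t k)| ^ p ≤
              (nuVar p f (g '' I)) ^ p * (supAbs (deriv g) I) ^ p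
              + (nuVar p f (g '' I)) ^ p * pairSum p (deriv g) (z₁.toList ++ L₁')
              + (nuVar p f (g '' I)) ^ p * pairSum p (deriv g) (ζ :: L₂') := by
            simpa using hbound'
          have hPS : |deriv g (t m)| ^ p + pairSum p (deriv g) (ζ :: L₂')
              ≤ pairSum p (deriv g) (z₂.toList ++ t m :: ζ :: L₂') := by
            cases z₂ with
            | none =>
              simp only [Option.toList_none, List.nil_append, pairSum_cons_cons]
              rw [hζ0, zero_sub, abs_neg]
            | some v =>
              simp only [Option.toList_some, List.singleton_append, pairSum_cons_cons]
              rw [hζ0, zero_sub, abs_neg]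
              have : (0:ℝ) ≤ |deriv g (t m) - deriv g v| ^ p :=
                Real.rpow_nonneg (abs_nonneg _) _
              linarith
          have hmul := mul_le_mul_of_nonneg_left hPS hAV
          rw [mul_add] at hmul
          linarith [hrun, hbound'']
    -- ================= INCREASING RUN : g (t K₁) < g (t (K₁+1)) ====================
    · by_cases hSV₂ : (Finset.Ico a N).filter (fun k => g (t (k+1)) < g (t k)) = ∅
      · refine ind_easy g f I ?_ z₁ z₂
        have hweak : ∀ k, a ≤ k → k < N → g (t k) ≤ g (t (k+1)) := by
          intro k h1 h2
          by_contra hlt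
          push_neg at hlt
          have hmem : k ∈ (Finset.Ico a N).filter (fun k => g (t (k+1)) < g (t k)) :=
            Finset.mem_filter.2 ⟨Finset.mem_Ico.2 ⟨h1, h2⟩, hlt⟩
          exact absurd hmem (by simp [hSV₂])
        calc ∑ k ∈ Finset.Ico a N, |f (g (t (k+1))) - f (g (t k))| ^ p * |deriv g (t k)| ^ p
            ≤ ∑ k ∈ Finset.Ico a N,
                |f (g (t (k+1))) - f (g (t k))| ^ p * (supAbs (deriv g) I) ^ p := by
              apply Finset.sum_le_sum
              intro k hk
              rw [Finset.mem_Ico] at hk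
              exact mul_le_mul_of_nonneg_left
                (Real.rpow_le_rpow (abs_nonneg _)
                  (abs_le_supAbs hp hgb (htI k (by omega))) (ppos hp).le)
                (Real.rpow_nonneg (abs_nonneg _) _)
          _ = (∑ k ∈ Finset.Ico a N, |f (g (t (k+1))) - f (g (t k))| ^ p)
                * (supAbs (deriv g) I) ^ p := by rw [Finset.sum_mul]
          _ ≤ (nuVar p f (g '' I)) ^ p * (supAbs (deriv g) I) ^ p := by
              apply mul_le_mul_of_nonneg_right _ hBB
              rw [Finset.sum_Ico_eq_sum_range]
              exact weak_mono_sum_le hp hfb (fun i => g (t (a + i))) (N - a)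
                (fun k hk => hweak (a + k) (by omega) (by omega))
                (fun k _ => ⟨t (a + k), htI _ (by omega), rfl⟩)
      · have hSV₂ne : ((Finset.Ico a N).filter (fun k => g (t (k+1)) < g (t k))).Nonempty :=
          Finset.nonempty_iff_ne_empty.2 hSV₂
        obtain ⟨j, hjmem, hjmin'⟩ := Finset.exists_min_image
          ((Finset.Ico a N).filter (fun k => g (t (k+1)) < g (t k))) id hSV₂ne
        rw [Finset.mem_filter, Finset.mem_Ico] at hjmem
        obtain ⟨⟨hja, hjN⟩, hjd⟩ := hjmem
        have hjmin : ∀ k, a ≤ k → k < N → g (t (k+1)) < g (t k) → j ≤ k := by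
          intro k h1 h2 h3
          exact hjmin' k (Finset.mem_filter.2 ⟨Finset.mem_Ico.2 ⟨h1, h2⟩, h3⟩)
        have hK₁j : K₁ < j := by
          have hle : K₁ ≤ j := hK₁min j hja hjN hjd.ne
          rcases hle.lt_or_eq with h | h
          · exact h
          · subst h
            exact absurd hjd (lt_asymm hd)
        have hweakj : ∀ k, a ≤ k → k < j → g (t k) ≤ g (t (k+1)) := by
          intro k h1 h2
          by_contra hlt
          push_neg at hlt
          exact absurd (hjmin k h1 (by omega) hlt) (by omega)
        have hK₁SV₁ : K₁ ∈ (Finset.Ico a j).filter (fun k => g (t k) < g (t (k+1))) :=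
          Finset.mem_filter.2 ⟨Finset.mem_Ico.2 ⟨hK₁a, hK₁j⟩, hd⟩
        obtain ⟨m, hmSV₁, hmax⟩ := Finset.exists_max_image
          ((Finset.Ico a j).filter (fun k => g (t k) < g (t (k+1))))
          (fun k => |deriv g (t k)|) ⟨K₁, hK₁SV₁⟩
        rw [Finset.mem_filter, Finset.mem_Ico] at hmSV₁
        obtain ⟨⟨hma, hmj⟩, hmd⟩ := hmSV₁
        have hmN : m < N := by omega
        have hrun : ∑ k ∈ Finset.Ico a j, |f (g (t (k+1))) - f (g (t k))| ^ p
              * |deriv g (t k)| ^ p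
            ≤ (nuVar p f (g '' I)) ^ p * |deriv g (t m)| ^ p := by
          calc ∑ k ∈ Finset.Ico a j, |f (g (t (k+1))) - f (g (t k))| ^ p * |deriv g (t k)| ^ p
              ≤ ∑ k ∈ Finset.Ico a j,
                  |f (g (t (k+1))) - f (g (t k))| ^ p * |deriv g (t m)| ^ p := by
                apply Finset.sum_le_sum
                intro k hk
                rw [Finset.mem_Ico] at hk
                by_cases he : g (t (k+1)) = g (t k)
                · rw [he, sub_self, abs_zero, Real.zero_rpow (pne hp), zero_mul, zero_mul]
                · have hklt : g (t k) < g (t (k+1)) :=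
                    lt_of_le_of_ne (hweakj k hk.1 hk.2) (fun h => he h.symm)
                  have hkmem : k ∈ (Finset.Ico a j).filter (fun k => g (t k) < g (t (k+1))) :=
                    Finset.mem_filter.2 ⟨Finset.mem_Ico.2 hk, hklt⟩
                  exact mul_le_mul_of_nonneg_left
                    (Real.rpow_le_rpow (abs_nonneg _) (hmax k hkmem) (ppos hp).le)
                    (Real.rpow_nonneg (abs_nonneg _) _)
            _ = (∑ k ∈ Finset.Ico a j, |f (g (t (k+1))) - f (g (t k))| ^ p)
                  * |deriv g (t m)| ^ p := by rw [Finset.sum_mul]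
            _ ≤ (nuVar p f (g '' I)) ^ p * |deriv g (t m)| ^ p := by
                apply mul_le_mul_of_nonneg_right _ (Real.rpow_nonneg (abs_nonneg _) _)
                rw [Finset.sum_Ico_eq_sum_range]
                exact weak_mono_sum_le hp hfb (fun i => g (t (a + i))) (j - a)
                  (fun k hk => hweakj (a + k) (by omega) (by omega))
                  (fun k _ => ⟨t (a + k), htI _ (by omega), rfl⟩)
        obtain ⟨ξm, hξmIoo, hξmval⟩ :=
          exists_deriv_eq_slope g (htlt m hmN) hg.continuous.continuousOn hg.differentiableOn
        have hξmpos : 0 < deriv g ξm := by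
          rw [hξmval]
          exact div_pos (sub_pos.2 hmd) (sub_pos.2 (htlt m hmN))
        obtain ⟨ξj, hξjIoo, hξjval⟩ :=
          exists_deriv_eq_slope g (htlt j hjN) hg.continuous.continuousOn hg.differentiableOn
        have hξjneg : deriv g ξj < 0 := by
          rw [hξjval]
          exact div_neg_of_neg_of_pos (sub_neg.2 hjd) (sub_pos.2 (htlt j hjN))
        have hξmξj : ξm < ξj :=
          lt_of_lt_of_le hξmIoo.2
            (le_trans (t_mono htlt (m+1) j (by omega) (by omega)) hξjIoo.1.le)
        obtain ⟨ζ, hζIoo, hζ0⟩ := exists_hasDerivWithinAt_eq_of_lt_of_gt hξmξj.le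
          (fun x _ => (hg x).hasDerivAt.hasDerivWithinAt) hξmpos hξjneg
        have hζtm : t m < ζ := lt_trans hξmIoo.1 hζIoo.1
        have hζtj1 : ζ < t (j+1) := lt_trans hζIoo.2 hξjIoo.2
        have hζI : ζ ∈ I :=
          hI.out (htI m (by omega)) (htI (j+1) (by omega)) ⟨hζtm.le, hζtj1.le⟩
        obtain ⟨L₁', L₂', hch₁', hmem₁', hch₂', hmem₂', hbound'⟩ :=
          IH j (by omega) (some ζ) z₂
            (by
              intro v hv
              obtain rfl : ζ = v := by injection hv
              exact ⟨hζI, hζ0, Or.inr ⟨hjN, hjd, hζtj1⟩⟩)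
            (by
              intro v hv
              obtain ⟨hvI, hv0, hvpos⟩ := hz₂ v hv
              refine ⟨hvI, hv0, Or.inl ?_⟩
              rcases hvpos with h | ⟨_, hsig, hvlt⟩
              · exact lt_of_lt_of_le h (t_mono htlt a j (by omega) (by omega))
              · have haK : K₁ ≤ a := hK₁min a le_rfl haN hsig.ne'
                exact lt_of_lt_of_le hvlt (t_mono htlt (a+1) j (by omega) (by omega)))
        have hchζ : (ζ :: L₁').Chain' (· < ·) := by simpa using hch₁'
        have hvtm : ∀ v, z₁ = some v → v < t m := by
          intro v hv
          obtain ⟨hvI, hv0, hvpos⟩ := hz₁ v hv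
          rcases hvpos with h | ⟨_, hsig, _⟩
          · exact lt_of_lt_of_le h (t_mono htlt a m (by omega) (by omega))
          · exact absurd (hjmin a le_rfl haN hsig) (by omega)
        refine ⟨t m :: ζ :: L₁', L₂', ?_, ?_, hch₂', hmem₂', ?_⟩
        · cases z₁ with
          | none =>
            simp only [Option.toList_none, List.nil_append]
            exact List.isChain_cons_cons.2 ⟨hζtm, hchζ⟩
          | some v =>
            simp only [Option.toList_some, List.singleton_append]
            exact List.isChain_cons_cons.2 ⟨hvtm v rfl,
              List.isChain_cons_cons.2 ⟨hζtm, hchζ⟩⟩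
        · intro x hx
          rcases List.mem_cons.1 hx with rfl | hx
          · exact htI m (by omega)
          rcases List.mem_cons.1 hx with rfl | hx
          · exact hζI
          · exact hmem₁' x hx
        · have hsplit := Finset.sum_Ico_consecutive
            (f := fun k => |f (g (t (k+1))) - f (g (t k))| ^ p * |deriv g (t k)| ^ p)
            (show a ≤ j by omega) (show j ≤ N by omega)
          rw [← hsplit]
          have hbound'' : ∑ k ∈ Finset.Ico j N,
              |f (g (t (k+1))) - f (g (t k))| ^ p * |deriv g (t k)| ^ p ≤
              (nuVar p f (g '' I)) ^ p * (supAbs (deriv g) I) ^ p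
              + (nuVar p f (g '' I)) ^ p * pairSum p (deriv g) (ζ :: L₁')
              + (nuVar p f (g '' I)) ^ p * pairSum p (deriv g) (z₂.toList ++ L₂') := by
            simpa using hbound'
          have hPS : |deriv g (t m)| ^ p + pairSum p (deriv g) (ζ :: L₁')
              ≤ pairSum p (deriv g) (z₁.toList ++ t m :: ζ :: L₁') := by
            cases z₁ with
            | none =>
              simp only [Option.toList_none, List.nil_append, pairSum_cons_cons]
              rw [hζ0, zero_sub, abs_neg]
            | some v =>
              simp only [Option.toList_some, List.singleton_append, pairSum_cons_cons]
              rw [hζ0, zero_sub, abs_neg]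
              have : (0:ℝ) ≤ |deriv g (t m) - deriv g v| ^ p :=
                Real.rpow_nonneg (abs_nonneg _) _
              linarith
          have hmul := mul_le_mul_of_nonneg_left hPS hAV
          rw [mul_add] at hmul
          linarith [hrun, hbound'']

end Stmt14
namespace Stmt14

variable {p : ℝ}

lemma add_rpow_le (hp : 1 ≤ p) {a b : ℝ} (ha : 0 ≤ a) (hb : 0 ≤ b) :
    a ^ p + b ^ p ≤ (a + b) ^ p := by
  have h := NNReal.add_rpow_le_rpow_add (⟨a, ha⟩ : NNReal) (⟨b, hb⟩ : NNReal) hp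
  have h2 := NNReal.coe_le_coe.2 h
  push_cast at h2
  exact h2

lemma run_bound (hp : 1 ≤ p) (I : Set ℝ) (hI : I.OrdConnected)
    (g f : ℝ → ℝ) (hg : Differentiable ℝ g)
    (hfb : BddAbove (varSums p f (g '' I))) (hgb : BddAbove (varSums p (deriv g) I))
    (N : ℕ) (t : ℕ → ℝ) (htI : ∀ k ≤ N, t k ∈ I) (htlt : ∀ k < N, t k < t (k + 1)) :
    ∑ k ∈ Finset.range N, |f (g (t (k+1))) - f (g (t k))| ^ p * |deriv g (t k)| ^ p ≤
      (nuVar p f (g '' I)) ^ p *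
        ((supAbs (deriv g) I) ^ p + 2 * (nuVar p (deriv g) I) ^ p) := by
  obtain ⟨L₁, L₂, hch₁, hmem₁, hch₂, hmem₂, hbound⟩ :=
    ind hp I hI g f hg hfb hgb N t htI htlt N 0 (by omega) none none
      (by intro v hv; cases hv) (by intro v hv; cases hv)
  rw [Finset.range_eq_Ico]
  refine le_trans hbound ?_
  simp only [Option.toList_none, List.nil_append] at hch₁ hch₂ hbound ⊢
  have hAV : (0:ℝ) ≤ (nuVar p f (g '' I)) ^ p := Real.rpow_nonneg nuVar_nonneg _
  have h1 : pairSum p (deriv g) L₁ ≤ (nuVar p (deriv g) I) ^ p :=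
    pairSum_le_nuVar_pow hp hgb L₁ hch₁ hmem₁
  have h2 : pairSum p (deriv g) L₂ ≤ (nuVar p (deriv g) I) ^ p :=
    pairSum_le_nuVar_pow hp hgb L₂ hch₂ hmem₂
  have hm1 := mul_le_mul_of_nonneg_left h1 hAV
  have hm2 := mul_le_mul_of_nonneg_left h2 hAV
  ring_nf
  nlinarith [hm1, hm2]

/-- The basic inequality `‖(f∘g)·g'‖ ≤ 2^{1/p} ‖f‖ ‖g'‖`. -/
lemma basic (hp : 1 ≤ p) (I : Set ℝ) (hI : I.OrdConnected) (g f : ℝ → ℝ)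
    (hg : Differentiable ℝ g) (hfb : BddAbove (varSums p f (g '' I)))
    (hgb : BddAbove (varSums p (deriv g) I)) :
    BddAbove (varSums p (fun x => f (g x) * deriv g x) I) ∧
    vNorm p (fun x => f (g x) * deriv g x) I ≤
      (2:ℝ) ^ (1/p) * vNorm p f (g '' I) * vNorm p (deriv g) I := by
  have hA : (0:ℝ) ≤ supAbs f (g '' I) := supAbs_nonneg
  have hAv : (0:ℝ) ≤ nuVar p f (g '' I) := nuVar_nonneg
  have hB : (0:ℝ) ≤ supAbs (deriv g) I := supAbs_nonneg
  have hBv : (0:ℝ) ≤ nuVar p (deriv g) I := nuVar_nonneg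
  have h2p : (0:ℝ) ≤ (2:ℝ) ^ (1/p) := Real.rpow_nonneg (by norm_num) _
  have h21 : (1:ℝ) ≤ (2:ℝ) ^ (1/p) := by
    calc (1:ℝ) = (2:ℝ) ^ (0:ℝ) := (Real.rpow_zero 2).symm
      _ ≤ (2:ℝ) ^ (1/p) := Real.rpow_le_rpow_of_exponent_le one_le_two
          (by positivity)
  have hRHS₂ : (0:ℝ) ≤ supAbs f (g '' I) * nuVar p (deriv g) I
      + (2:ℝ) ^ (1/p) * (nuVar p f (g '' I) * (supAbs (deriv g) I + nuVar p (deriv g) I)) := by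
    have t1 : (0:ℝ) ≤ supAbs f (g '' I) * nuVar p (deriv g) I := mul_nonneg hA hBv
    have t2 : (0:ℝ) ≤ nuVar p f (g '' I) * (supAbs (deriv g) I + nuVar p (deriv g) I) :=
      mul_nonneg hAv (by linarith)
    have t3 := mul_nonneg h2p t2
    linarith
  have key : ∀ S ∈ varSums p (fun x => f (g x) * deriv g x) I,
      S ≤ supAbs f (g '' I) * nuVar p (deriv g) I
        + (2:ℝ) ^ (1/p)
          * (nuVar p f (g '' I) * (supAbs (deriv g) I + nuVar p (deriv g) I)) := by
    rintro S ⟨N, t, htI, htlt, rfl⟩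
    set X : ℕ → ℝ := fun k => supAbs f (g '' I) * |deriv g (t (k+1)) - deriv g (t k)|
      with hXdef
    set Y : ℕ → ℝ := fun k => |f (g (t (k+1))) - f (g (t k))| * |deriv g (t k)| with hYdef
    have hXnn : ∀ k, 0 ≤ X k := fun k => mul_nonneg hA (abs_nonneg _)
    have hYnn : ∀ k, 0 ≤ Y k := fun k => mul_nonneg (abs_nonneg _) (abs_nonneg _)
    have hptw : ∀ k ∈ Finset.range N,
        |(fun x => f (g x) * deriv g x) (t (k+1))
          - (fun x => f (g x) * deriv g x) (t k)| ^ p ≤ |X k + Y k| ^ p := by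
      intro k hk
      rw [Finset.mem_range] at hk
      apply Real.rpow_le_rpow (abs_nonneg _) _ (ppos hp).le
      refine le_trans ?_ (le_abs_self _)
      show |f (g (t (k+1))) * deriv g (t (k+1)) - f (g (t k)) * deriv g (t k)| ≤ X k + Y k
      have hid : f (g (t (k+1))) * deriv g (t (k+1)) - f (g (t k)) * deriv g (t k)
          = f (g (t (k+1))) * (deriv g (t (k+1)) - deriv g (t k))
            + (f (g (t (k+1))) - f (g (t k))) * deriv g (t k) := by ring
      rw [hid, hXdef, hYdef]
      calc |f (g (t (k+1))) * (deriv g (t (k+1)) - deriv g (t k))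
            + (f (g (t (k+1))) - f (g (t k))) * deriv g (t k)|
          ≤ |f (g (t (k+1)))| * |deriv g (t (k+1)) - deriv g (t k)|
            + |f (g (t (k+1))) - f (g (t k))| * |deriv g (t k)| := by
            rw [← abs_mul, ← abs_mul]; exact abs_add_le _ _
        _ ≤ supAbs f (g '' I) * |deriv g (t (k+1)) - deriv g (t k)|
            + |f (g (t (k+1))) - f (g (t k))| * |deriv g (t k)| :=
            add_le_add_left (mul_le_mul_of_nonneg_right
              (abs_le_supAbs hp hfb ⟨t (k+1), htI (k+1) (by omega), rfl⟩)
              (abs_nonneg _)) _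
    have hsum0 : (0:ℝ) ≤ ∑ k ∈ Finset.range N,
        |(fun x => f (g x) * deriv g x) (t (k+1))
          - (fun x => f (g x) * deriv g x) (t k)| ^ p :=
      Finset.sum_nonneg fun k _ => Real.rpow_nonneg (abs_nonneg _) _
    have hX : (∑ k ∈ Finset.range N, |X k| ^ p) ^ (1/p)
        ≤ supAbs f (g '' I) * nuVar p (deriv g) I := by
      have he : ∀ k ∈ Finset.range N, |X k| ^ p
          = (supAbs f (g '' I)) ^ p * |deriv g (t (k+1)) - deriv g (t k)| ^ p := by
        intro k _
        rw [abs_of_nonneg (hXnn k), hXdef]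
        exact Real.mul_rpow hA (abs_nonneg _)
      rw [Finset.sum_congr rfl he, ← Finset.mul_sum]
      have h2 := sum_le_nuVar_pow hp hgb htI htlt
      calc ((supAbs f (g '' I)) ^ p
            * ∑ k ∈ Finset.range N, |deriv g (t (k+1)) - deriv g (t k)| ^ p) ^ (1/p)
          ≤ ((supAbs f (g '' I)) ^ p * (nuVar p (deriv g) I) ^ p) ^ (1/p) := by
            apply Real.rpow_le_rpow
              (mul_nonneg (Real.rpow_nonneg hA _)
                (Finset.sum_nonneg fun k _ => Real.rpow_nonneg (abs_nonneg _) _))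
              (mul_le_mul_of_nonneg_left h2 (Real.rpow_nonneg hA _)) (by positivity)
        _ = supAbs f (g '' I) * nuVar p (deriv g) I := by
            rw [← Real.mul_rpow hA hBv, rpow_rpow_inv hp (mul_nonneg hA hBv)]
    have hY : (∑ k ∈ Finset.range N, |Y k| ^ p) ^ (1/p)
        ≤ (2:ℝ) ^ (1/p)
          * (nuVar p f (g '' I) * (supAbs (deriv g) I + nuVar p (deriv g) I)) := by
      have he : ∀ k ∈ Finset.range N, |Y k| ^ p
          = |f (g (t (k+1))) - f (g (t k))| ^ p * |deriv g (t k)| ^ p := by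
        intro k _
        rw [abs_of_nonneg (hYnn k), hYdef]
        exact Real.mul_rpow (abs_nonneg _) (abs_nonneg _)
      rw [Finset.sum_congr rfl he]
      have hrb := run_bound hp I hI g f hg hfb hgb N t htI htlt
      have hstep : (nuVar p f (g '' I)) ^ p
            * ((supAbs (deriv g) I) ^ p + 2 * (nuVar p (deriv g) I) ^ p)
          ≤ 2 * (nuVar p f (g '' I) * (supAbs (deriv g) I + nuVar p (deriv g) I)) ^ p := by
        rw [Real.mul_rpow hAv (add_nonneg hB hBv)]
        have hs1 : (supAbs (deriv g) I) ^ p + (nuVar p (deriv g) I) ^ p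
            ≤ (supAbs (deriv g) I + nuVar p (deriv g) I) ^ p := add_rpow_le hp hB hBv
        have hs2 : (nuVar p (deriv g) I) ^ p
            ≤ (supAbs (deriv g) I + nuVar p (deriv g) I) ^ p :=
          Real.rpow_le_rpow hBv (by linarith) (ppos hp).le
        have hs3 : (supAbs (deriv g) I) ^ p + 2 * (nuVar p (deriv g) I) ^ p
            ≤ 2 * (supAbs (deriv g) I + nuVar p (deriv g) I) ^ p := by linarith
        have h4 := mul_le_mul_of_nonneg_left hs3 (Real.rpow_nonneg hAv p)
        linarith
      calc (∑ k ∈ Finset.range N,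
            |f (g (t (k+1))) - f (g (t k))| ^ p * |deriv g (t k)| ^ p) ^ (1/p)
          ≤ (2 * (nuVar p f (g '' I)
              * (supAbs (deriv g) I + nuVar p (deriv g) I)) ^ p) ^ (1/p) := by
            apply Real.rpow_le_rpow
              (Finset.sum_nonneg fun k _ =>
                mul_nonneg (Real.rpow_nonneg (abs_nonneg _) _)
                  (Real.rpow_nonneg (abs_nonneg _) _))
              (le_trans hrb hstep) (by positivity)
        _ = (2:ℝ) ^ (1/p) * (nuVar p f (g '' I)
              * (supAbs (deriv g) I + nuVar p (deriv g) I)) := by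
            rw [Real.mul_rpow (by norm_num)
              (Real.rpow_nonneg (mul_nonneg hAv (add_nonneg hB hBv)) _),
              rpow_rpow_inv hp (mul_nonneg hAv (add_nonneg hB hBv))]
    calc (∑ k ∈ Finset.range N,
          |(fun x => f (g x) * deriv g x) (t (k+1))
            - (fun x => f (g x) * deriv g x) (t k)| ^ p) ^ (1/p)
        ≤ (∑ k ∈ Finset.range N, |X k + Y k| ^ p) ^ (1/p) :=
          Real.rpow_le_rpow hsum0 (Finset.sum_le_sum hptw) (by positivity)
      _ ≤ (∑ k ∈ Finset.range N, |X k| ^ p) ^ (1/p)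
          + (∑ k ∈ Finset.range N, |Y k| ^ p) ^ (1/p) :=
          Real.Lp_add_le (Finset.range N) X Y hp
      _ ≤ supAbs f (g '' I) * nuVar p (deriv g) I
          + (2:ℝ) ^ (1/p) * (nuVar p f (g '' I)
            * (supAbs (deriv g) I + nuVar p (deriv g) I)) := add_le_add hX hY
  have hbdd : BddAbove (varSums p (fun x => f (g x) * deriv g x) I) := ⟨_, key⟩
  refine ⟨hbdd, ?_⟩
  have hnu : nuVar p (fun x => f (g x) * deriv g x) I
      ≤ supAbs f (g '' I) * nuVar p (deriv g) I
        + (2:ℝ) ^ (1/p)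
          * (nuVar p f (g '' I) * (supAbs (deriv g) I + nuVar p (deriv g) I)) :=
    Real.sSup_le key hRHS₂
  have hsup : supAbs (fun x => f (g x) * deriv g x) I
      ≤ supAbs f (g '' I) * supAbs (deriv g) I := by
    apply Real.sSup_le _ (mul_nonneg hA hB)
    rintro v ⟨x, hx, rfl⟩
    simp only [abs_mul]
    exact mul_le_mul (abs_le_supAbs hp hfb ⟨x, hx, rfl⟩)
      (abs_le_supAbs hp hgb hx) (abs_nonneg _) hA
  have hfinal : supAbs f (g '' I) * supAbs (deriv g) I
      + (supAbs f (g '' I) * nuVar p (deriv g) I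
        + (2:ℝ) ^ (1/p)
          * (nuVar p f (g '' I) * (supAbs (deriv g) I + nuVar p (deriv g) I)))
      ≤ (2:ℝ) ^ (1/p) * vNorm p f (g '' I) * vNorm p (deriv g) I := by
    show _ ≤ (2:ℝ) ^ (1/p) * (supAbs f (g '' I) + nuVar p f (g '' I))
      * (supAbs (deriv g) I + nuVar p (deriv g) I)
    nlinarith [mul_nonneg (mul_nonneg (sub_nonneg.2 h21) hA) (add_nonneg hB hBv)]
  calc vNorm p (fun x => f (g x) * deriv g x) I
      = supAbs (fun x => f (g x) * deriv g x) I
        + nuVar p (fun x => f (g x) * deriv g x) I := rfl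
    _ ≤ supAbs f (g '' I) * supAbs (deriv g) I
        + (supAbs f (g '' I) * nuVar p (deriv g) I
          + (2:ℝ) ^ (1/p)
            * (nuVar p f (g '' I) * (supAbs (deriv g) I + nuVar p (deriv g) I))) :=
        add_le_add hsup hnu
    _ ≤ _ := hfinal

end Stmt14
namespace Stmt14

variable {p : ℝ}

lemma foldr_comp_eq (L : List (ℝ → ℝ)) (z : ℝ → ℝ) :
    L.foldr (· ∘ ·) z = (L.foldr (· ∘ ·) id) ∘ z := by
  induction L with
  | nil => rfl
  | cons a L IH => simp [List.foldr_cons, IH, Function.comp_assoc]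

lemma compIco_of_lt (g : ℕ → ℝ → ℝ) {i n : ℕ} (h : n < i) : compIco g i n = id := by
  unfold compIco
  rw [List.Ico.eq_nil_of_le (by omega)]
  rfl

lemma compIco_succ (g : ℕ → ℝ → ℝ) {i n : ℕ} (h : i ≤ n + 1) :
    compIco g i (n+1) = compIco g i n ∘ g (n+1) := by
  unfold compIco
  rw [List.Ico.succ_top (by omega : i ≤ n + 1), List.map_append, List.foldr_append]
  rw [foldr_comp_eq]
  simp [Function.comp_assoc]

lemma compIco_self (g : ℕ → ℝ → ℝ) (n : ℕ) : compIco g n n = g n := by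
  have h := compIco_succ g (i := n) (n := n - 1) (by omega)
  rcases n with _ | m
  · unfold compIco
    have : List.Ico 0 1 = [0] := rfl
    rw [this]
    simp
  · rw [show m + 1 - 1 = m from rfl] at h
    rw [h, compIco_of_lt g (by omega)]
    simp

lemma compIco_diff (g : ℕ → ℝ → ℝ) :
    ∀ (n i : ℕ), (∀ k, i ≤ k → k ≤ n → Differentiable ℝ (g k)) →
      Differentiable ℝ (compIco g i n) := by
  intro n
  induction n with
  | zero =>
    intro i hk
    rcases Nat.eq_zero_or_pos i with rfl | hi
    · rw [compIco_self]
      exact hk 0 le_rfl le_rfl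
    · rw [compIco_of_lt g (by omega)]
      exact differentiable_id
  | succ n IH =>
    intro i hk
    by_cases hi : i ≤ n + 1
    · rw [compIco_succ g hi]
      exact Differentiable.comp (IH i (fun k h1 h2 => hk k h1 (by omega)))
        (hk (n+1) hi le_rfl)
    · rw [compIco_of_lt g (by omega)]
      exact differentiable_id

lemma image_ordConnected {I : Set ℝ} (hI : I.OrdConnected) {g : ℝ → ℝ}
    (hg : Continuous g) : (g '' I).OrdConnected :=
  (hI.isPreconnected.image g hg.continuousOn).ordConnected

/-- Main induction on the number of composed functions. -/
lemma main (hp : 1 ≤ p) : ∀ n, 1 ≤ n → ∀ I : Set ℝ, I.OrdConnected →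
    ∀ g : ℕ → ℝ → ℝ, (∀ k, 1 ≤ k → k ≤ n → Differentiable ℝ (g k)) →
    BddAbove (varSums p (deriv (g n)) I) →
    (∀ k ∈ Finset.Ico 1 n, BddAbove (varSums p (deriv (g k)) (compIco g (k+1) n '' I))) →
    ∀ f : ℝ → ℝ, BddAbove (varSums p f (compIco g 1 n '' I)) →
    BddAbove (varSums p (fun x => f (compIco g 1 n x) * deriv (compIco g 1 n) x) I) ∧
    vNorm p (fun x => f (compIco g 1 n x) * deriv (compIco g 1 n) x) I ≤
      (2:ℝ) ^ ((n:ℝ)/p) * vNorm p f (compIco g 1 n '' I) * vNorm p (deriv (g n)) I *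
        ∏ k ∈ Finset.Ico 1 n, vNorm p (deriv (g k)) (compIco g (k+1) n '' I) := by
  intro n hn
  induction n, hn using Nat.le_induction with
  | base =>
    intro I hI g hg hgn hgk f hf
    have e1 : compIco g 1 1 = g 1 := compIco_self g 1
    rw [e1] at hf ⊢
    rw [Finset.Ico_self, Finset.prod_empty, mul_one]
    have hb := basic hp I hI (g 1) f (hg 1 le_rfl le_rfl) hf hgn
    simpa using hb
  | succ n hn IH =>
    intro I hI g hg hgn hgk f hf
    have hgn1 : Differentiable ℝ (g (n+1)) := hg (n+1) (by omega) le_rfl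
    set J := g (n+1) '' I with hJdef
    have hJ : J.OrdConnected := image_ordConnected hI hgn1.continuous
    have hCdiff : Differentiable ℝ (compIco g 1 n) :=
      compIco_diff g n 1 (fun k h1 h2 => hg k h1 (by omega))
    have hpeel : compIco g 1 (n+1) = compIco g 1 n ∘ g (n+1) := compIco_succ g (by omega)
    have hpeelk : ∀ k, 1 ≤ k → k ≤ n → compIco g (k+1) (n+1) '' I
        = compIco g (k+1) n '' J := by
      intro k h1 h2
      rw [compIco_succ g (by omega), Set.image_comp]
    have hself : compIco g (n+1) (n+1) '' I = J := by rw [compIco_self g (n+1)]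
    -- IH applied on J
    have hgn' : BddAbove (varSums p (deriv (g n)) J) := by
      have := hgk n (Finset.mem_Ico.2 ⟨by omega, by omega⟩)
      rwa [hself] at this
    have hgk' : ∀ k ∈ Finset.Ico 1 n,
        BddAbove (varSums p (deriv (g k)) (compIco g (k+1) n '' J)) := by
      intro k hk
      rw [Finset.mem_Ico] at hk
      have := hgk k (Finset.mem_Ico.2 ⟨hk.1, by omega⟩)
      rwa [hpeelk k hk.1 (by omega)] at this
    have hf' : BddAbove (varSums p f (compIco g 1 n '' J)) := by
      have : compIco g 1 (n+1) '' I = compIco g 1 n '' J := by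
        rw [hpeel, Set.image_comp]
      rwa [this] at hf
    obtain ⟨hbddF, hF⟩ := IH J hJ g (fun k h1 h2 => hg k h1 (by omega)) hgn' hgk' f hf'
    -- basic on the outer layer
    obtain ⟨hbddU, hU⟩ := basic hp I hI (g (n+1))
      (fun x => f (compIco g 1 n x) * deriv (compIco g 1 n) x) hgn1 hbddF hgn
    have hfun : (fun x => (fun y => f (compIco g 1 n y) * deriv (compIco g 1 n) y)
          (g (n+1) x) * deriv (g (n+1)) x)
        = (fun x => f (compIco g 1 (n+1) x) * deriv (compIco g 1 (n+1)) x) := by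
      funext x
      rw [hpeel]
      have hd : deriv (compIco g 1 n ∘ g (n+1)) x
          = deriv (compIco g 1 n) (g (n+1) x) * deriv (g (n+1)) x :=
        deriv_comp x (hCdiff _) (hgn1 _)
      rw [hd]
      show f (compIco g 1 n (g (n+1) x)) * deriv (compIco g 1 n) (g (n+1) x)
          * deriv (g (n+1)) x = _
      rw [Function.comp_apply]
      ring
    rw [hfun] at hbddU hU
    refine ⟨hbddU, ?_⟩
    -- numeric assembly
    have hZ : (0:ℝ) ≤ vNorm p (deriv (g (n+1))) I := vNorm_nonneg
    have h2p : (0:ℝ) ≤ (2:ℝ) ^ (1/p) := Real.rpow_nonneg (by norm_num) _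
    have hmul : vNorm p (fun x => f (compIco g 1 (n+1) x) * deriv (compIco g 1 (n+1)) x) I
        ≤ (2:ℝ) ^ (1/p) * ((2:ℝ) ^ ((n:ℝ)/p) * vNorm p f (compIco g 1 n '' J)
            * vNorm p (deriv (g n)) J
            * ∏ k ∈ Finset.Ico 1 n, vNorm p (deriv (g k)) (compIco g (k+1) n '' J))
          * vNorm p (deriv (g (n+1))) I := by
      refine le_trans hU ?_
      exact mul_le_mul_of_nonneg_right (mul_le_mul_of_nonneg_left hF h2p) hZ
    refine le_trans hmul (le_of_eq ?_)
    rw [Finset.prod_Ico_succ_top (a := 1) (b := n) (by omega)]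
    have e1 : compIco g 1 n '' J = compIco g 1 (n+1) '' I := by
      rw [hpeel, Set.image_comp]
    have e2 : ∀ k ∈ Finset.Ico 1 n, vNorm p (deriv (g k)) (compIco g (k+1) n '' J)
        = vNorm p (deriv (g k)) (compIco g (k+1) (n+1) '' I) := by
      intro k hk
      rw [Finset.mem_Ico] at hk
      rw [hpeelk k hk.1 (by omega)]
    have e3 : vNorm p (deriv (g n)) J = vNorm p (deriv (g n)) (compIco g (n+1) (n+1) '' I) := by
      rw [hself]
    have e4 : (2:ℝ) ^ (1/p) * (2:ℝ) ^ ((n:ℝ)/p) = (2:ℝ) ^ (((n:ℕ)+1 : ℝ)/p) := by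
      rw [← Real.rpow_add (by norm_num : (0:ℝ) < 2)]
      congr 1
      ring
    rw [e1, e3, Finset.prod_congr rfl e2]
    push_cast
    rw [← e4]
    push_cast
    ring
  
end Stmt14


/-- n-fold basic inequality:
`‖(f∘(g₁∘⋯∘g_n))·h‖_{𝒱_p(I)} ≤ 2^{n/p} ‖f‖ ‖g_n'‖ ∏_{k=1}^{n-1} ‖g_k'‖`,
where `h = (g₁∘⋯∘g_n)'`. -/
theorem stmt14 (p : ℝ) (hp : 1 ≤ p) (n : ℕ) (hn : 2 ≤ n) (I : Set ℝ) (hI : I.OrdConnected)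
    (g : ℕ → ℝ → ℝ) (hg : ∀ k, 1 ≤ k → k ≤ n → Differentiable ℝ (g k))
    (hgn : BddAbove (varSums p (deriv (g n)) I))
    (hgk : ∀ k ∈ Finset.Ico 1 n,
      BddAbove (varSums p (deriv (g k)) (compIco g (k + 1) n '' I)))
    (f : ℝ → ℝ) (hf : BddAbove (varSums p f (compIco g 1 n '' I))) :
    vNorm p (fun t => f (compIco g 1 n t) * deriv (compIco g 1 n) t) I ≤
      (2 : ℝ) ^ ((n : ℝ) / p) * vNorm p f (compIco g 1 n '' I) *
        vNorm p (deriv (g n)) I *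
        ∏ k ∈ Finset.Ico 1 n, vNorm p (deriv (g k)) (compIco g (k + 1) n '' I) :=
  (Stmt14.main hp n (by omega) I hI g hg hgn hgk f hf).2
end
end

section
/- Let 1 < p < ∞ and let I be a compact interval [a,b]. Then W^{1,p}(I) coincides with the space 𝒱_p^{1-1/p}(I) of functions of bounded p-variation of order 1 - 1/p: a function f belongs to W^{1,p}(I) if and only if sup over families of disjoint subintervals [a_k,b_k] of I of ∑_k |f(b_k)-f(a_k)|^p / (b_k - a_k)^{p-1} is finite. -/
open Set Finset MeasureTheory Real

noncomputable section

/-- Set of partition sums for the p-variation of order `α` of `f` over `I`. -/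
def varSumsA (p α : ℝ) (f : ℝ → ℝ) (I : Set ℝ) : Set ℝ :=
  {S | ∃ (N : ℕ) (t : ℕ → ℝ), (∀ k ≤ N, t k ∈ I) ∧ (∀ k < N, t k < t (k + 1)) ∧
    S = (∑ k ∈ Finset.range N,
          |f (t (k + 1)) - f (t k)| ^ p / (t (k + 1) - t k) ^ (α * p)) ^ (1 / p)}

/-- The p-variation of order `α`, `ν_p^α(f, I)`. -/
def nuVarA (p α : ℝ) (f : ℝ → ℝ) (I : Set ℝ) : ℝ := sSup (varSumsA p α f I)

open Filter
open scoped ENNReal NNReal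

section aux
variable {p a b M : ℝ} {f : ℝ → ℝ}

lemma zero_mem_varSums (hp : 1 < p) (hab : a ≤ b) :
    (0:ℝ) ∈ varSumsA p (1-1/p) f (Set.Icc a b) := by
  refine ⟨0, fun _ => a, fun k _ => ⟨le_refl a, hab⟩, fun k hk => by omega, ?_⟩
  rw [Finset.sum_range_zero, Real.zero_rpow]
  positivity

lemma M_nonneg (hp : 1 < p) (hab : a ≤ b)
    (hM : ∀ S ∈ varSumsA p (1-1/p) f (Set.Icc a b), S ≤ M) : 0 ≤ M :=
  hM 0 (zero_mem_varSums hp hab)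

lemma sum_le_Mp (hp : 1 < p)
    (hM : ∀ S ∈ varSumsA p (1-1/p) f (Set.Icc a b), S ≤ M)
    (N : ℕ) (t : ℕ → ℝ) (ht : ∀ k ≤ N, t k ∈ Set.Icc a b) (hst : ∀ k < N, t k < t (k + 1)) :
    ∑ k ∈ Finset.range N,
        |f (t (k + 1)) - f (t k)| ^ p / (t (k + 1) - t k) ^ ((1-1/p) * p) ≤ M ^ p := by
  have hp0 : (0:ℝ) < p := lt_trans one_pos hp
  set S := ∑ k ∈ Finset.range N,
      |f (t (k + 1)) - f (t k)| ^ p / (t (k + 1) - t k) ^ ((1-1/p) * p) with hS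
  have hSnn : 0 ≤ S := by
    apply Finset.sum_nonneg
    intro k hk
    have h2 : (0:ℝ) < (t (k + 1) - t k) ^ ((1-1/p) * p) :=
      Real.rpow_pos_of_pos (sub_pos.2 (hst k (Finset.mem_range.1 hk))) _
    exact div_nonneg (Real.rpow_nonneg (abs_nonneg _) _) h2.le
  have hmem : S ^ (1/p) ∈ varSumsA p (1-1/p) f (Set.Icc a b) := ⟨N, t, ht, hst, rfl⟩
  have h1 : S ^ (1/p) ≤ M := hM _ hmem
  have h2 : (S ^ (1/p)) ^ p = S := by
    rw [← Real.rpow_mul hSnn, one_div_mul_cancel hp0.ne', Real.rpow_one]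
  calc S = (S ^ (1/p)) ^ p := h2.symm
    _ ≤ M ^ p := Real.rpow_le_rpow (Real.rpow_nonneg hSnn _) h1 hp0.le

lemma two_point (hp : 1 < p)
    (hM : ∀ S ∈ varSumsA p (1-1/p) f (Set.Icc a b), S ≤ M)
    {x y : ℝ} (hx : x ∈ Set.Icc a b) (hy : y ∈ Set.Icc a b) (hxy : x < y) :
    |f y - f x| ^ p ≤ M ^ p * (y - x) ^ ((1-1/p) * p) := by
  have := sum_le_Mp hp hM 1 (fun k => if k = 0 then x else y)
    (by intro k hk; interval_cases k <;> simpa) (by intro k hk; interval_cases k <;> simpa)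
  simp only [Finset.sum_range_one] at this
  norm_num at this
  rw [← one_div p] at this
  have hpos : (0:ℝ) < (y - x) ^ ((1-1/p) * p) := Real.rpow_pos_of_pos (sub_pos.2 hxy) _
  rw [div_le_iff₀ hpos] at this
  linarith [this]

lemma holder_bound (hp : 1 < p) (hab : a ≤ b)
    (hM : ∀ S ∈ varSumsA p (1-1/p) f (Set.Icc a b), S ≤ M)
    {x y : ℝ} (hx : x ∈ Set.Icc a b) (hy : y ∈ Set.Icc a b) (hxy : x ≤ y) :
    |f y - f x| ≤ M * (y - x) ^ (1 - 1/p) := by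
  have hp0 : (0:ℝ) < p := lt_trans one_pos hp
  have hM0 : 0 ≤ M := M_nonneg hp hab hM
  have he : (0:ℝ) < 1 - 1/p := by
    have : 1/p < 1 := by rw [div_lt_one hp0]; exact hp
    linarith
  rcases eq_or_lt_of_le hxy with rfl | hlt
  · rw [sub_self, sub_self, abs_zero, Real.zero_rpow he.ne', mul_zero]
  have h := two_point hp hM hx hy hlt
  have h1 : |f y - f x| = (|f y - f x| ^ p) ^ (1/p) := by
    rw [← Real.rpow_mul (abs_nonneg _), mul_one_div, div_self hp0.ne', Real.rpow_one]
  rw [h1]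
  have h2 : (M ^ p * (y - x) ^ ((1-1/p) * p)) ^ (1/p) = M * (y - x) ^ (1 - 1/p) := by
    rw [Real.mul_rpow (Real.rpow_nonneg hM0 _) (Real.rpow_nonneg (sub_pos.2 hlt).le _),
      ← Real.rpow_mul hM0, ← Real.rpow_mul (sub_pos.2 hlt).le, mul_one_div, div_self hp0.ne',
      Real.rpow_one]
    congr 1
    field_simp
  rw [← h2]
  exact Real.rpow_le_rpow (Real.rpow_nonneg (abs_nonneg _) _) h (by positivity)

lemma holder_bound' (hp : 1 < p) (hab : a ≤ b)
    (hM : ∀ S ∈ varSumsA p (1-1/p) f (Set.Icc a b), S ≤ M)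
    {x y : ℝ} (hx : x ∈ Set.Icc a b) (hy : y ∈ Set.Icc a b) :
    |f y - f x| ≤ M * |y - x| ^ (1 - 1/p) := by
  rcases le_total x y with h | h
  · rw [abs_of_nonneg (by linarith : (0:ℝ) ≤ y - x)]; exact holder_bound hp hab hM hx hy h
  · rw [abs_sub_comm, show |y - x| = x - y by rw [abs_of_nonpos (by linarith)]; ring]
    exact holder_bound hp hab hM hy hx h

lemma cont_on (hp : 1 < p) (hab : a ≤ b)
    (hM : ∀ S ∈ varSumsA p (1-1/p) f (Set.Icc a b), S ≤ M) :
    ContinuousOn f (Set.Icc a b) := by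
  have hM0 : 0 ≤ M := M_nonneg hp hab hM
  have he : (0:ℝ) < 1 - 1/p := by
    have hp0 : (0:ℝ) < p := lt_trans one_pos hp
    have : 1/p < 1 := by rw [div_lt_one hp0]; exact hp
    linarith
  rw [Metric.continuousOn_iff]
  intro x hx ε hε
  refine ⟨(ε / (M+1)) ^ (1/(1-1/p)), Real.rpow_pos_of_pos (by positivity) _, fun y hy hd => ?_⟩
  have h1 : |f y - f x| ≤ M * |y - x| ^ (1 - 1/p) := holder_bound' hp hab hM hx hy
  have key : ((ε / (M+1)) ^ (1/(1-1/p))) ^ (1-1/p) = ε / (M+1) := by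
    rw [← Real.rpow_mul (by positivity), one_div_mul_cancel he.ne', Real.rpow_one]
  have h2 : |y - x| ^ (1 - 1/p) < ε / (M+1) := by
    rw [← key]
    exact Real.rpow_lt_rpow (abs_nonneg _) (by simpa [Real.dist_eq] using hd) he
  have h3 : M * |y - x| ^ (1 - 1/p) < M * (ε / (M+1)) + ε/ (M+1) := by
    nlinarith [Real.rpow_nonneg (abs_nonneg (y - x)) (1 - 1/p), h2]
  rw [Real.dist_eq]
  have : M * (ε / (M+1)) + ε / (M+1) = ε := by field_simp
  calc |f y - f x| ≤ M * |y - x| ^ (1 - 1/p) := h1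
    _ < ε := by rw [← this]; exact h3

end aux

section aux2
variable {p a b M : ℝ} {f : ℝ → ℝ}

lemma strict_sum_abs_le (hp : 1 < p) (hab : a ≤ b)
    (hM : ∀ S ∈ varSumsA p (1-1/p) f (Set.Icc a b), S ≤ M)
    (n : ℕ) (u : ℕ → ℝ) (hu : ∀ i ≤ n, u i ∈ Set.Icc a b) (hsu : ∀ i < n, u i < u (i+1)) :
    ∑ i ∈ Finset.range n, |f (u (i+1)) - f (u i)| ≤ M * (b - a) ^ (1 - 1/p) := by
  have hp0 : (0:ℝ) < p := lt_trans one_pos hp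
  have hM0 : 0 ≤ M := M_nonneg hp hab hM
  have hq : Real.HolderConjugate p (p / (p-1)) := Real.HolderConjugate.conjExponent hp
  set q := p / (p - 1) with hqdef
  have hq1 : 1/q = 1 - 1/p := by rw [hqdef]; field_simp
  have key : ∀ i ∈ Finset.range n,
      |f (u (i+1)) - f (u i)| =
        (|f (u (i+1)) - f (u i)| / (u (i+1) - u i) ^ (1 - 1/p)) * ((u (i+1) - u i) ^ (1 - 1/p)) := by
    intro i hi
    have hpos : (0:ℝ) < (u (i+1) - u i) ^ (1 - 1/p) :=
      Real.rpow_pos_of_pos (sub_pos.2 (hsu i (Finset.mem_range.1 hi))) _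
    exact (div_mul_cancel₀ _ hpos.ne').symm
  rw [Finset.sum_congr rfl key]
  refine le_trans (Real.inner_le_Lp_mul_Lq (Finset.range n) _ _ hq) ?_
  have h1 : ∑ i ∈ Finset.range n,
      abs (|f (u (i+1)) - f (u i)| / (u (i+1) - u i) ^ (1 - 1/p)) ^ p
      = ∑ i ∈ Finset.range n,
        |f (u (i+1)) - f (u i)| ^ p / (u (i+1) - u i) ^ ((1-1/p) * p) := by
    apply Finset.sum_congr rfl
    intro i hi
    have hd : (0:ℝ) < u (i+1) - u i := sub_pos.2 (hsu i (Finset.mem_range.1 hi))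
    have hpos : (0:ℝ) < (u (i+1) - u i) ^ (1 - 1/p) := Real.rpow_pos_of_pos hd _
    rw [abs_of_nonneg (div_nonneg (abs_nonneg _) hpos.le),
      Real.div_rpow (abs_nonneg _) hpos.le, ← Real.rpow_mul hd.le]
  have h2 : ∑ i ∈ Finset.range n, |(u (i+1) - u i) ^ (1 - 1/p)| ^ q
      = u n - u 0 := by
    rw [← Finset.sum_range_sub u n]
    apply Finset.sum_congr rfl
    intro i hi
    have hd : (0:ℝ) < u (i+1) - u i := sub_pos.2 (hsu i (Finset.mem_range.1 hi))
    have hpos : (0:ℝ) < (u (i+1) - u i) ^ (1 - 1/p) := Real.rpow_pos_of_pos hd _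
    rw [abs_of_nonneg hpos.le, ← Real.rpow_mul hd.le]
    have he1 : (1 - 1/p) * q = 1 := by
      rw [hqdef]; field_simp
      exact div_self (by linarith : p - (1:ℝ) ≠ 0)
    rw [he1, Real.rpow_one]
  rw [h1, h2]
  have hsumnn : (0:ℝ) ≤ ∑ i ∈ Finset.range n,
      |f (u (i+1)) - f (u i)| ^ p / (u (i+1) - u i) ^ ((1-1/p) * p) := by
    apply Finset.sum_nonneg
    intro i hi
    have hd : (0:ℝ) < u (i+1) - u i := sub_pos.2 (hsu i (Finset.mem_range.1 hi))
    exact div_nonneg (Real.rpow_nonneg (abs_nonneg _) _) (Real.rpow_pos_of_pos hd _).le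
  have h3 : (∑ i ∈ Finset.range n,
      |f (u (i+1)) - f (u i)| ^ p / (u (i+1) - u i) ^ ((1-1/p) * p)) ^ (1/p) ≤ M := by
    have := Real.rpow_le_rpow hsumnn (sum_le_Mp hp hM n u hu hsu) (one_div_pos.2 hp0).le
    rwa [← Real.rpow_mul hM0, mul_one_div, div_self hp0.ne', Real.rpow_one] at this
  have hun : (0:ℝ) ≤ u n - u 0 := by
    rw [← Finset.sum_range_sub u n]
    exact Finset.sum_nonneg fun i hi => (sub_pos.2 (hsu i (Finset.mem_range.1 hi))).le
  have h5 : (u n - u 0 : ℝ) ^ (1/q) ≤ (b - a) ^ (1/q) := by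
    apply Real.rpow_le_rpow hun _ (one_div_pos.2 hq.symm.pos).le
    have h0 := hu 0 (Nat.zero_le n)
    have hn' := hu n le_rfl
    linarith [h0.1, hn'.2]
  calc _ ≤ M * (b - a) ^ (1/q) :=
        mul_le_mul h3 h5 (Real.rpow_nonneg hun _) hM0
    _ = M * (b - a) ^ (1 - 1/p) := by rw [hq1]

lemma mono_sum_abs_le (hp : 1 < p) (hab : a ≤ b)
    (hM : ∀ S ∈ varSumsA p (1-1/p) f (Set.Icc a b), S ≤ M)
    (n : ℕ) : ∀ (u : ℕ → ℝ), Monotone u → (∀ i, u i ∈ Set.Icc a b) →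
    ∑ i ∈ Finset.range n, |f (u (i+1)) - f (u i)| ≤ M * (b - a) ^ (1 - 1/p) := by
  induction n with
  | zero =>
    intro u hu hus
    rw [Finset.sum_range_zero]
    have hM0 : 0 ≤ M := M_nonneg hp hab hM
    exact mul_nonneg hM0 (Real.rpow_nonneg (by linarith) _)
  | succ n ih =>
    intro u hu hus
    by_cases hdup : ∃ i < n + 1, u i = u (i+1)
    · obtain ⟨i, hi, hieq⟩ := hdup
      set u' : ℕ → ℝ := fun j => if j < i then u j else u (j+1) with hu'def
      have hu'mono : Monotone u' := by
        apply monotone_nat_of_le_succ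
        intro j
        by_cases h1 : j + 1 < i
        · simp only [hu'def, if_pos h1, if_pos (Nat.lt_of_succ_lt h1)]
          exact hu (Nat.le_succ j)
        · by_cases h2 : j < i
          · simp only [hu'def, if_pos h2, if_neg h1]
            exact hu (by omega)
          · simp only [hu'def, if_neg h2, if_neg h1]
            exact hu (by omega)
      have hu'mem : ∀ j, u' j ∈ Set.Icc a b := by
        intro j; by_cases h : j < i <;> simp only [hu'def, h, if_true, if_false, if_pos, if_neg,
          not_false_iff] <;> [exact hus j; exact hus (j+1)]
      have hsum : ∑ j ∈ Finset.range (n+1), |f (u (j+1)) - f (u j)|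
          = ∑ j ∈ Finset.range n, |f (u' (j+1)) - f (u' j)| := by
        have hFi : |f (u (i+1)) - f (u i)| = 0 := by rw [hieq, sub_self, abs_zero]
        have hmem : i ∈ Finset.range (n+1) := Finset.mem_range.2 hi
        rw [← Finset.add_sum_erase _ _ hmem, hFi, zero_add]
        symm
        apply Finset.sum_nbij' (i := fun j => if j < i then j else j + 1)
          (j := fun k => if k < i then k else k - 1)
        · intro j hj
          rw [Finset.mem_range] at hj
          by_cases h : j < i
          · simp only [if_pos h, Finset.mem_erase, Finset.mem_range]; omega
          · simp only [if_neg h, Finset.mem_erase, Finset.mem_range]; omega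
        · intro k hk
          rw [Finset.mem_erase, Finset.mem_range] at hk
          by_cases h : k < i
          · simp only [if_pos h, Finset.mem_range]; omega
          · simp only [if_neg h, Finset.mem_range]; omega
        · intro j hj
          rw [Finset.mem_range] at hj
          by_cases h : j < i
          · simp [h]
          · simp only [if_neg h, if_neg (show ¬ j + 1 < i by omega)]; omega
        · intro k hk
          rw [Finset.mem_erase, Finset.mem_range] at hk
          by_cases h : k < i
          · simp [h]
          · simp only [if_neg h, if_neg (show ¬ k - 1 < i by omega)]; omega
        · intro j hj
          rw [Finset.mem_range] at hj
          by_cases h1 : j + 1 < i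
          · rw [if_pos (Nat.lt_of_succ_lt h1)]
            simp only [hu'def, if_pos h1, if_pos (Nat.lt_of_succ_lt h1)]
          · by_cases h2 : j < i
            · have hij : i = j + 1 := by omega
              rw [if_pos h2]
              simp only [hu'def, if_neg h1, if_pos h2]
              rw [← hij, ← hieq, hij]
            · rw [if_neg h2]
              simp only [hu'def, if_neg h1, if_neg h2, if_neg (by omega : ¬ j + 1 < i)]
      rw [hsum]
      exact ih u' hu'mono hu'mem
    · push_neg at hdup
      apply strict_sum_abs_le hp hab hM (n+1) u (fun i _ => hus i)
      intro i hi
      exact lt_of_le_of_ne (hu (Nat.le_succ i)) (hdup i hi)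

lemma bdd_var (hp : 1 < p) (hab : a ≤ b)
    (hM : ∀ S ∈ varSumsA p (1-1/p) f (Set.Icc a b), S ≤ M) :
    LocallyBoundedVariationOn f (Set.Icc a b) := by
  apply BoundedVariationOn.locallyBoundedVariationOn
  have : eVariationOn f (Set.Icc a b) ≤ ENNReal.ofReal (M * (b - a) ^ (1 - 1/p)) := by
    show (⨆ (q : ℕ × {u : ℕ → ℝ // Monotone u ∧ ∀ i, u i ∈ Set.Icc a b}),
      ∑ i ∈ Finset.range q.1, edist (f (q.2.1 (i+1))) (f (q.2.1 i))) ≤ _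
    apply iSup_le
    rintro ⟨n, u, hmono, hmem⟩
    have h1 : ∑ i ∈ Finset.range n, edist (f (u (i+1))) (f (u i))
        = ENNReal.ofReal (∑ i ∈ Finset.range n, |f (u (i+1)) - f (u i)|) := by
      rw [ENNReal.ofReal_sum_of_nonneg (fun i _ => abs_nonneg _)]
      apply Finset.sum_congr rfl
      intro i _
      rw [edist_dist, Real.dist_eq]
    rw [h1]
    exact ENNReal.ofReal_le_ofReal (mono_sum_abs_le hp hab hM n u hmono hmem)
  exact fun h => absurd (h ▸ this) (by simp)

end aux2
def gridPt (a b : ℝ) (n : ℕ) (k : ℕ) : ℝ := a + k * ((b - a) / (n+1))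

def stepFun (f : ℝ → ℝ) (a b : ℝ) (n : ℕ) : ℝ → ℝ := fun x =>
  ∑ k ∈ Finset.range (n+1),
    Set.indicator (Set.Ico (gridPt a b n k) (gridPt a b n (k+1)))
      (fun _ => (f (gridPt a b n (k+1)) - f (gridPt a b n k)) / ((b - a) / (n+1))) x

section aux3
variable {p a b M : ℝ} {f : ℝ → ℝ} {n : ℕ}

lemma hstep_pos (hab : a < b) (n : ℕ) : (0:ℝ) < (b - a) / (n+1) :=
  div_pos (by linarith) (by positivity)

lemma gridPt_zero : gridPt a b n 0 = a := by simp [gridPt]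

lemma gridPt_last : gridPt a b n (n+1) = b := by
  have h : ((n:ℝ) + 1) ≠ 0 := by positivity
  simp only [gridPt]
  push_cast
  field_simp
  ring

lemma gridPt_succ_sub (k : ℕ) : gridPt a b n (k+1) - gridPt a b n k = (b - a) / (n+1) := by
  simp only [gridPt]
  push_cast
  ring

lemma gridPt_strictMono (hab : a < b) {j k : ℕ} (hjk : j < k) : gridPt a b n j < gridPt a b n k := by
  have h := hstep_pos hab n
  simp only [gridPt]
  have : (j:ℝ) < k := by exact_mod_cast hjk
  nlinarith

lemma gridPt_mono (hab : a < b) {j k : ℕ} (hjk : j ≤ k) : gridPt a b n j ≤ gridPt a b n k := by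
  rcases eq_or_lt_of_le hjk with rfl | h
  · exact le_refl _
  · exact (gridPt_strictMono hab h).le

lemma gridPt_mem (hab : a < b) {k : ℕ} (hk : k ≤ n + 1) : gridPt a b n k ∈ Set.Icc a b := by
  have h1 : gridPt a b n 0 ≤ gridPt a b n k := gridPt_mono hab (Nat.zero_le k)
  have h2 : gridPt a b n k ≤ gridPt a b n (n+1) := gridPt_mono hab hk
  rw [gridPt_zero] at h1
  rw [gridPt_last] at h2
  exact ⟨h1, h2⟩

lemma stepFun_measurable : Measurable (stepFun f a b n) := by
  apply Finset.measurable_sum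
  intro k _
  exact (measurable_const).indicator measurableSet_Ico

lemma stepFun_eval (hab : a < b) {k : ℕ} (hk : k ≤ n)
    {x : ℝ} (hx : x ∈ Set.Ico (gridPt a b n k) (gridPt a b n (k+1))) :
    stepFun f a b n x = (f (gridPt a b n (k+1)) - f (gridPt a b n k)) / ((b - a) / (n+1)) := by
  unfold stepFun
  rw [Finset.sum_eq_single_of_mem k (Finset.mem_range.2 (Nat.lt_succ_of_le hk))]
  · rw [Set.indicator_of_mem hx]
  · intro j _ hj
    apply Set.indicator_of_notMem
    intro hxj
    rcases lt_or_gt_of_ne hj with h | h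
    · exact absurd (lt_of_le_of_lt (le_trans (gridPt_mono hab h) hx.1) hxj.2) (lt_irrefl _)
    · exact absurd (lt_of_lt_of_le hx.2 (le_trans (gridPt_mono hab h) hxj.1)) (lt_irrefl _)

lemma cell_exists (hab : a < b) {x : ℝ} (hx : x ∈ Set.Ico a b) (n : ℕ) :
    ∃ k ≤ n, x ∈ Set.Ico (gridPt a b n k) (gridPt a b n (k+1)) := by
  have h := hstep_pos hab n
  set hh := (b - a) / (n+1) with hhdef
  set d := (x - a) / hh with hd
  have hd0 : 0 ≤ d := div_nonneg (by linarith [hx.1]) h.le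
  have hdlt : d < n + 1 := by
    rw [hd, div_lt_iff₀ h, hhdef]
    have : x - a < b - a := by linarith [hx.2]
    calc x - a < b - a := this
      _ = ((n:ℝ)+1) * ((b-a)/(n+1)) := by field_simp
  refine ⟨(⌊d⌋).toNat, ?_, ?_, ?_⟩
  · have h1 : ⌊d⌋ < (n:ℤ) + 1 := by
      rw [Int.floor_lt]
      exact_mod_cast hdlt
    omega
  · have hcast : ((⌊d⌋).toNat : ℝ) = ((⌊d⌋ : ℤ) : ℝ) := by
      exact_mod_cast congrArg (fun z : ℤ => (z : ℝ)) (Int.toNat_of_nonneg (Int.floor_nonneg.2 hd0))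
    have h2 : ((⌊d⌋).toNat : ℝ) ≤ d := by
      rw [hcast]
      exact Int.floor_le d
    have : gridPt a b n (⌊d⌋).toNat = a + ((⌊d⌋).toNat : ℝ) * hh := rfl
    rw [this]
    have : ((⌊d⌋).toNat : ℝ) * hh ≤ d * hh := mul_le_mul_of_nonneg_right h2 h.le
    have hdx : d * hh = x - a := by rw [hd]; field_simp
    linarith
  · have hcast : ((⌊d⌋).toNat : ℝ) = ((⌊d⌋ : ℤ) : ℝ) := by
      exact_mod_cast congrArg (fun z : ℤ => (z : ℝ)) (Int.toNat_of_nonneg (Int.floor_nonneg.2 hd0))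
    have h3 : d < ((⌊d⌋).toNat : ℝ) + 1 := by
      rw [hcast]
      exact Int.lt_floor_add_one d
    have : gridPt a b n ((⌊d⌋).toNat + 1) = a + (((⌊d⌋).toNat : ℝ) + 1) * hh := by
      simp only [gridPt]; push_cast; ring
    rw [this]
    have hdx : d * hh = x - a := by rw [hd]; field_simp
    nlinarith

lemma stepFun_zero_outside (hab : a < b) {x : ℝ} (hx : x ∉ Set.Ico a b) :
    stepFun f a b n x = 0 := by
  unfold stepFun
  apply Finset.sum_eq_zero
  intro k hk
  apply Set.indicator_of_notMem
  intro hxk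
  rw [Finset.mem_range] at hk
  apply hx
  constructor
  · exact le_trans (gridPt_mem hab (by omega : k ≤ n + 1)).1 hxk.1
  · exact lt_of_lt_of_le hxk.2 (gridPt_mem hab (by omega : k + 1 ≤ n + 1)).2

lemma stepFun_tendsto (hab : a < b) {x : ℝ} (hx : x ∈ Set.Ioo a b) {d : ℝ}
    (hd : HasDerivAt f d x) :
    Filter.Tendsto (fun n => stepFun f a b n x) Filter.atTop (nhds d) := by
  rw [Metric.tendsto_atTop]
  intro ε hε
  have hlittle := (hasDerivAt_iff_isLittleO.1 hd)
  rw [Asymptotics.isLittleO_iff] at hlittle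
  have h3 := hlittle (show (0:ℝ) < ε/3 by linarith)
  rw [Metric.eventually_nhds_iff] at h3
  obtain ⟨δ, hδ, hb⟩ := h3
  obtain ⟨N, hN⟩ := exists_nat_gt ((b - a) / δ)
  refine ⟨N, fun n hn => ?_⟩
  have hh := hstep_pos hab n
  have hhδ : (b - a) / (n+1) < δ := by
    rw [div_lt_iff₀ (by positivity)]
    have h1 : (b - a) / δ < N := hN
    have h2 : (N:ℝ) ≤ n := by exact_mod_cast hn
    rw [div_lt_iff₀ hδ] at h1
    nlinarith
  obtain ⟨k, hk, hxk⟩ := cell_exists hab ⟨hx.1.le, hx.2⟩ n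
  set l := gridPt a b n k with hl
  set r := gridPt a b n (k+1) with hr
  have hrl : r - l = (b - a) / (n+1) := gridPt_succ_sub k
  have heval : stepFun f a b n x = (f r - f l) / ((b - a) / (n+1)) := stepFun_eval hab hk hxk
  have hlx : dist l x < δ := by
    rw [Real.dist_eq, abs_of_nonpos (by linarith [hxk.1] : l - x ≤ 0)]
    have : x < r := hxk.2
    linarith
  have hrx : dist r x < δ := by
    rw [Real.dist_eq, abs_of_nonneg (by linarith [hxk.2] : 0 ≤ r - x)]
    have : l ≤ x := hxk.1
    linarith
  have hbl := hb hlx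
  have hbr := hb hrx
  simp only [Real.norm_eq_abs, smul_eq_mul] at hbl hbr
  rw [Real.dist_eq, heval]
  have key : |(f r - f l) / ((b - a) / (n+1)) - d| ≤ 2 * (ε/3) := by
    rw [← hrl]
    have hrl0 : (0:ℝ) < r - l := hrl ▸ hh
    have h1 : (f r - f l) / (r - l) - d = ((f r - f x - (r - x) * d) - (f l - f x - (l - x) * d)) / (r - l) := by
      field_simp
      ring
    rw [h1, abs_div, abs_of_pos hrl0, div_le_iff₀ hrl0]
    have h2 : |(f r - f x - (r - x) * d) - (f l - f x - (l - x) * d)| ≤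
        |f r - f x - (r - x) * d| + |f l - f x - (l - x) * d| := abs_sub _ _
    have h4 : |r - x| ≤ r - l := by
      rw [abs_of_nonneg (by linarith [hxk.2] : (0:ℝ) ≤ r - x)]
      linarith [hxk.1]
    have h5 : |l - x| ≤ r - l := by
      rw [abs_of_nonpos (by linarith [hxk.1] : l - x ≤ 0)]
      linarith [hxk.2]
    calc |(f r - f x - (r - x) * d) - (f l - f x - (l - x) * d)|
        ≤ |f r - f x - (r - x) * d| + |f l - f x - (l - x) * d| := h2
      _ ≤ ε/3 * |r - x| + ε/3 * |l - x| := add_le_add hbr hbl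
      _ ≤ ε/3 * (r - l) + ε/3 * (r - l) := by
          apply add_le_add <;> apply mul_le_mul_of_nonneg_left _ (by linarith : (0:ℝ) ≤ ε/3)
          · exact h4
          · exact h5
      _ = 2 * (ε/3) * (r - l) := by ring
  linarith

end aux3
section aux4
variable {p a b M : ℝ} {f : ℝ → ℝ} {n : ℕ}

lemma stepFun_lintegral_le (hp : 1 < p) (hab : a < b)
    (hM : ∀ S ∈ varSumsA p (1-1/p) f (Set.Icc a b), S ≤ M) (n : ℕ) :
    ∫⁻ x in Set.Icc a b, (‖stepFun f a b n x‖₊ : ℝ≥0∞) ^ p ∂volume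
      ≤ ENNReal.ofReal (M ^ p) := by
  have hp0 : (0:ℝ) < p := lt_trans one_pos hp
  have hpos := hstep_pos hab n
  set hh := (b - a) / (n+1) with hhdef
  set g : ℕ → ℝ := gridPt a b n with hgdef
  set c : ℕ → ℝ := fun k => (f (g (k+1)) - f (g k)) / hh with hcdef
  have hptwise : ∀ x, (‖stepFun f a b n x‖₊ : ℝ≥0∞) ^ p ≤
      ∑ k ∈ Finset.range (n+1),
        Set.indicator (Set.Ico (g k) (g (k+1))) (fun _ => ENNReal.ofReal (|c k| ^ p)) x := by
    intro x
    by_cases hx : x ∈ Set.Ico a b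
    · obtain ⟨k, hk, hxk⟩ := cell_exists hab hx n
      have heval : stepFun f a b n x = c k := stepFun_eval hab hk hxk
      have h1 : (‖stepFun f a b n x‖₊ : ℝ≥0∞) ^ p = ENNReal.ofReal (|c k| ^ p) := by
        rw [heval, ← enorm_eq_nnnorm, Real.enorm_eq_ofReal_abs,
          ENNReal.ofReal_rpow_of_nonneg (abs_nonneg _) hp0.le]
      rw [h1]
      have h2 : Set.indicator (Set.Ico (g k) (g (k+1)))
          (fun _ => ENNReal.ofReal (|c k| ^ p)) x = ENNReal.ofReal (|c k| ^ p) :=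
        Set.indicator_of_mem hxk _
      calc ENNReal.ofReal (|c k| ^ p)
          = Set.indicator (Set.Ico (g k) (g (k+1))) (fun _ => ENNReal.ofReal (|c k| ^ p)) x := h2.symm
        _ ≤ _ := Finset.single_le_sum (f := fun k => Set.indicator (Set.Ico (g k) (g (k+1)))
            (fun _ => ENNReal.ofReal (|c k| ^ p)) x) (fun _ _ => zero_le)
            (Finset.mem_range.2 (Nat.lt_succ_of_le hk))
    · rw [stepFun_zero_outside hab hx]
      simp only [nnnorm_zero, ENNReal.coe_zero]
      rw [ENNReal.zero_rpow_of_pos hp0]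
      exact zero_le
  calc ∫⁻ x in Set.Icc a b, (‖stepFun f a b n x‖₊ : ℝ≥0∞) ^ p ∂volume
      ≤ ∫⁻ x in Set.Icc a b, (∑ k ∈ Finset.range (n+1),
          Set.indicator (Set.Ico (g k) (g (k+1))) (fun _ => ENNReal.ofReal (|c k| ^ p)) x) ∂volume :=
        MeasureTheory.lintegral_mono (fun x => hptwise x)
    _ ≤ ∫⁻ x, (∑ k ∈ Finset.range (n+1),
          Set.indicator (Set.Ico (g k) (g (k+1))) (fun _ => ENNReal.ofReal (|c k| ^ p)) x) ∂volume :=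
        MeasureTheory.setLIntegral_le_lintegral _ _
    _ = ∑ k ∈ Finset.range (n+1), ∫⁻ x,
          Set.indicator (Set.Ico (g k) (g (k+1))) (fun _ => ENNReal.ofReal (|c k| ^ p)) x ∂volume :=
        MeasureTheory.lintegral_finset_sum _ (fun k _ => measurable_const.indicator measurableSet_Ico)
    _ = ∑ k ∈ Finset.range (n+1), ENNReal.ofReal (|c k| ^ p) * ENNReal.ofReal hh := by
        apply Finset.sum_congr rfl
        intro k _
        rw [MeasureTheory.lintegral_indicator measurableSet_Ico,
          MeasureTheory.setLIntegral_const, Real.volume_Ico]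
        congr 1
        rw [hgdef, gridPt_succ_sub]
    _ = ENNReal.ofReal (∑ k ∈ Finset.range (n+1), |c k| ^ p * hh) := by
        rw [ENNReal.ofReal_sum_of_nonneg (fun k _ =>
          mul_nonneg (Real.rpow_nonneg (abs_nonneg _) _) hpos.le)]
        apply Finset.sum_congr rfl
        intro k _
        rw [ENNReal.ofReal_mul (Real.rpow_nonneg (abs_nonneg _) _)]
    _ ≤ ENNReal.ofReal (M ^ p) := by
        apply ENNReal.ofReal_le_ofReal
        have hterm : ∀ k ∈ Finset.range (n+1), |c k| ^ p * hh
            = |f (g (k+1)) - f (g k)| ^ p / (g (k+1) - g k) ^ ((1-1/p) * p) := by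
          intro k _
          have e1 : (1 - 1/p) * p = p - 1 := by field_simp
          have e2 : hh ^ p = hh ^ (p-1) * hh := by
            rw [← Real.rpow_add_one hpos.ne' (p-1)]
            norm_num
          have hsub : g (k+1) - g k = hh := gridPt_succ_sub k
          rw [hsub, e1, hcdef]
          simp only
          rw [abs_div, abs_of_pos hpos, Real.div_rpow (abs_nonneg _) hpos.le, e2]
          have hne : hh ^ (p-1) ≠ 0 := (Real.rpow_pos_of_pos hpos _).ne'
          field_simp
        rw [Finset.sum_congr rfl hterm]
        exact sum_le_Mp hp hM (n+1) g (fun k hk => gridPt_mem hab hk)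
          (fun k _ => gridPt_strictMono hab (Nat.lt_succ_self k))

lemma stepFun_eLpNorm_le (hp : 1 < p) (hab : a < b)
    (hM : ∀ S ∈ varSumsA p (1-1/p) f (Set.Icc a b), S ≤ M) (n : ℕ) :
    eLpNorm (stepFun f a b n) (ENNReal.ofReal p) (volume.restrict (Set.Icc a b))
      ≤ ENNReal.ofReal M := by
  have hp0 : (0:ℝ) < p := lt_trans one_pos hp
  have hM0 : 0 ≤ M := M_nonneg hp hab.le hM
  have hne0 : ENNReal.ofReal p ≠ 0 := by
    simp [ENNReal.ofReal_eq_zero]; linarith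
  rw [MeasureTheory.eLpNorm_eq_lintegral_rpow_enorm_toReal hne0 ENNReal.ofReal_ne_top,
    ENNReal.toReal_ofReal hp0.le]
  have h1 := stepFun_lintegral_le hp hab hM n
  calc (∫⁻ x, (‖stepFun f a b n x‖₊ : ℝ≥0∞) ^ p ∂(volume.restrict (Set.Icc a b))) ^ (1/p)
      ≤ (ENNReal.ofReal (M ^ p)) ^ (1/p) := ENNReal.rpow_le_rpow h1 (by positivity)
    _ = ENNReal.ofReal M := by
        rw [ENNReal.ofReal_rpow_of_nonneg (Real.rpow_nonneg hM0 _) (by positivity),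
          ← Real.rpow_mul hM0, mul_one_div, div_self hp0.ne', Real.rpow_one]

lemma stepFun_memLp (hp : 1 < p) (hab : a < b)
    (hM : ∀ S ∈ varSumsA p (1-1/p) f (Set.Icc a b), S ≤ M) (n : ℕ) :
    MemLp (stepFun f a b n) (ENNReal.ofReal p) (volume.restrict (Set.Icc a b)) :=
  ⟨stepFun_measurable.aestronglyMeasurable,
    lt_of_le_of_lt (stepFun_eLpNorm_le hp hab hM n) ENNReal.ofReal_lt_top⟩

end aux4
open Classical in
def limDeriv (f : ℝ → ℝ) (a b : ℝ) : ℝ → ℝ := fun x =>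
  if h : ∃ L, Filter.Tendsto (fun n => stepFun f a b n x) Filter.atTop (nhds L) then h.choose else 0

section aux5
variable {p a b M : ℝ} {f : ℝ → ℝ}

lemma limDeriv_ae_tendsto (hp : 1 < p) (hab : a < b)
    (hM : ∀ S ∈ varSumsA p (1-1/p) f (Set.Icc a b), S ≤ M) :
    ∀ᵐ x ∂(volume.restrict (Set.Icc a b)),
      Filter.Tendsto (fun n => stepFun f a b n x) Filter.atTop (nhds (limDeriv f a b x)) := by
  have hbv := bdd_var hp hab.le hM
  have hdiff := hbv.ae_differentiableWithinAt_of_mem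
  have hIoo : ∀ᵐ x ∂(volume.restrict (Set.Icc a b)), x ∈ Set.Ioo a b := by
    rw [MeasureTheory.ae_iff]
    rw [Measure.restrict_apply' measurableSet_Icc]
    apply measure_mono_null (_ : _ ⊆ ({a, b} : Set ℝ))
    · exact (Set.finite_singleton b).insert a |>.measure_zero volume
    · rintro x ⟨hnx, hx⟩
      simp only [Set.mem_Ioo, not_and_or, not_lt] at hnx
      rcases hnx with h | h
      · have : x = a := le_antisymm h hx.1
        simp [this]
      · have : x = b := le_antisymm hx.2 h
        simp [this]
  filter_upwards [hIoo, MeasureTheory.ae_restrict_of_ae hdiff] with x hx hdx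
  have hdwa : DifferentiableWithinAt ℝ f (Set.Icc a b) x := hdx ⟨hx.1.le, hx.2.le⟩
  have hda : DifferentiableAt ℝ f x :=
    hdwa.differentiableAt (Icc_mem_nhds hx.1 hx.2)
  have htend := stepFun_tendsto hab hx hda.hasDerivAt
  have hex : ∃ L, Filter.Tendsto (fun n => stepFun f a b n x) Filter.atTop (nhds L) :=
    ⟨deriv f x, htend⟩
  unfold limDeriv
  rw [dif_pos hex]
  exact hex.choose_spec

lemma limDeriv_lintegral_le (hp : 1 < p) (hab : a < b)
    (hM : ∀ S ∈ varSumsA p (1-1/p) f (Set.Icc a b), S ≤ M) :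
    ∫⁻ x, (‖limDeriv f a b x‖₊ : ℝ≥0∞) ^ p ∂(volume.restrict (Set.Icc a b))
      ≤ ENNReal.ofReal (M ^ p) := by
  have hp0 : (0:ℝ) < p := lt_trans one_pos hp
  have h1 : ∫⁻ x, (‖limDeriv f a b x‖₊ : ℝ≥0∞) ^ p ∂(volume.restrict (Set.Icc a b))
      = ∫⁻ x, Filter.liminf (fun n => (‖stepFun f a b n x‖₊ : ℝ≥0∞) ^ p) Filter.atTop
          ∂(volume.restrict (Set.Icc a b)) := by
    apply MeasureTheory.lintegral_congr_ae
    filter_upwards [limDeriv_ae_tendsto hp hab hM] with x hx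
    have : Filter.Tendsto (fun n => (‖stepFun f a b n x‖₊ : ℝ≥0∞) ^ p) Filter.atTop
        (nhds ((‖limDeriv f a b x‖₊ : ℝ≥0∞) ^ p)) := by
      apply Filter.Tendsto.comp (ENNReal.continuous_rpow_const.tendsto _)
      exact (ENNReal.tendsto_coe.2 (Filter.Tendsto.comp continuous_nnnorm.continuousAt hx))
    exact this.liminf_eq.symm
  rw [h1]
  calc ∫⁻ x, Filter.liminf (fun n => (‖stepFun f a b n x‖₊ : ℝ≥0∞) ^ p) Filter.atTop ∂(volume.restrict (Set.Icc a b)) ≤ Filter.liminf (fun n => ∫⁻ x, (‖stepFun f a b n x‖₊ : ℝ≥0∞) ^ p ∂(volume.restrict (Set.Icc a b))) Filter.atTop := MeasureTheory.lintegral_liminf_le (fun n => (stepFun_measurable.enorm).pow_const _)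
    _ ≤ ENNReal.ofReal (M ^ p) := Filter.liminf_le_of_frequently_le
        (Filter.Frequently.of_forall fun n => stepFun_lintegral_le hp hab hM n)

lemma limDeriv_memLp (hp : 1 < p) (hab : a < b)
    (hM : ∀ S ∈ varSumsA p (1-1/p) f (Set.Icc a b), S ≤ M) :
    MemLp (limDeriv f a b) (ENNReal.ofReal p) (volume.restrict (Set.Icc a b)) := by
  have hp0 : (0:ℝ) < p := lt_trans one_pos hp
  have hmeas : AEStronglyMeasurable (limDeriv f a b) (volume.restrict (Set.Icc a b)) :=
    aestronglyMeasurable_of_tendsto_ae Filter.atTop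
      (fun n => stepFun_measurable.aestronglyMeasurable) (limDeriv_ae_tendsto hp hab hM)
  refine ⟨hmeas, ?_⟩
  have hne0 : ENNReal.ofReal p ≠ 0 := by
    simp [ENNReal.ofReal_eq_zero]; linarith
  rw [MeasureTheory.eLpNorm_eq_lintegral_rpow_enorm_toReal hne0 ENNReal.ofReal_ne_top,
    ENNReal.toReal_ofReal hp0.le]
  calc (∫⁻ x, (‖limDeriv f a b x‖₊ : ℝ≥0∞) ^ p ∂(volume.restrict (Set.Icc a b))) ^ (1/p)
      ≤ (ENNReal.ofReal (M ^ p)) ^ (1/p) :=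
        ENNReal.rpow_le_rpow (limDeriv_lintegral_le hp hab hM) (by positivity)
    _ < ⊤ := by
        apply ENNReal.rpow_lt_top_of_nonneg (by positivity)
        exact ENNReal.ofReal_ne_top

end aux5
section aux6
variable {p a b M : ℝ} {f : ℝ → ℝ}

lemma restrict_finite : IsFiniteMeasure (volume.restrict (Set.Icc a b)) :=
  ⟨by rw [Measure.restrict_apply_univ]; exact measure_Icc_lt_top⟩

lemma stepFun_unifIntegrable (hp : 1 < p) (hab : a < b)
    (hM : ∀ S ∈ varSumsA p (1-1/p) f (Set.Icc a b), S ≤ M) :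
    UnifIntegrable (fun n => stepFun f a b n) 1 (volume.restrict (Set.Icc a b)) := by
  have hp0 : (0:ℝ) < p := lt_trans one_pos hp
  have hM0 : 0 ≤ M := M_nonneg hp hab.le hM
  have he : (0:ℝ) < 1 - 1/p := by
    have : 1/p < 1 := by rw [div_lt_one hp0]; exact hp
    linarith
  intro ε hε
  refine ⟨(ε/(M+1)) ^ (p/(p-1)), Real.rpow_pos_of_pos (by positivity) _, fun n s hs hμs => ?_⟩
  set μ := volume.restrict (Set.Icc a b) with hμ
  have h1 : eLpNorm (s.indicator (stepFun f a b n)) 1 μ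
      = eLpNorm (stepFun f a b n) 1 (μ.restrict s) :=
    MeasureTheory.eLpNorm_indicator_eq_eLpNorm_restrict hs
  have hple : (1:ℝ≥0∞) ≤ ENNReal.ofReal p := by
    rw [← ENNReal.ofReal_one]
    exact ENNReal.ofReal_le_ofReal hp.le
  have h2 : eLpNorm (stepFun f a b n) 1 (μ.restrict s)
      ≤ eLpNorm (stepFun f a b n) (ENNReal.ofReal p) (μ.restrict s)
        * ((μ.restrict s) Set.univ) ^ (1/(1:ℝ≥0∞).toReal - 1/(ENNReal.ofReal p).toReal) :=
    MeasureTheory.eLpNorm_le_eLpNorm_mul_rpow_measure_univ hple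
      stepFun_measurable.aestronglyMeasurable
  have hexp : 1/(1:ℝ≥0∞).toReal - 1/(ENNReal.ofReal p).toReal = 1 - 1/p := by
    rw [ENNReal.toReal_one, ENNReal.toReal_ofReal hp0.le]
    norm_num
  have h3 : eLpNorm (stepFun f a b n) (ENNReal.ofReal p) (μ.restrict s)
      ≤ ENNReal.ofReal M :=
    le_trans (MeasureTheory.eLpNorm_mono_measure _ Measure.restrict_le_self)
      (stepFun_eLpNorm_le hp hab hM n)
  have h4 : (μ.restrict s) Set.univ ≤ ENNReal.ofReal ((ε/(M+1)) ^ (p/(p-1))) := by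
    rw [Measure.restrict_apply_univ]; exact hμs
  calc eLpNorm (s.indicator (stepFun f a b n)) 1 μ
      = eLpNorm (stepFun f a b n) 1 (μ.restrict s) := h1
    _ ≤ eLpNorm (stepFun f a b n) (ENNReal.ofReal p) (μ.restrict s)
        * ((μ.restrict s) Set.univ) ^ (1/(1:ℝ≥0∞).toReal - 1/(ENNReal.ofReal p).toReal) := h2
    _ ≤ ENNReal.ofReal M * (ENNReal.ofReal ((ε/(M+1)) ^ (p/(p-1)))) ^ (1 - 1/p) := by
        rw [hexp]
        exact mul_le_mul' h3 (ENNReal.rpow_le_rpow h4 he.le)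
    _ ≤ ENNReal.ofReal ε := by
        rw [ENNReal.ofReal_rpow_of_nonneg (Real.rpow_nonneg (by positivity) _) he.le,
          ← ENNReal.ofReal_mul hM0]
        apply ENNReal.ofReal_le_ofReal
        have hδe : ((ε/(M+1)) ^ (p/(p-1))) ^ (1 - 1/p) = ε/(M+1) := by
          rw [← Real.rpow_mul (by positivity)]
          have h9 : (p/(p-1)) * (1 - 1/p) = 1 := by
            field_simp
            exact div_self (by linarith : p - 1 ≠ 0)
          rw [h9, Real.rpow_one]
        rw [hδe]
        have h8 : M/(M+1) ≤ 1 := by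
          rw [div_le_one (by positivity)]; linarith
        calc M * (ε/(M+1)) = ε * (M/(M+1)) := by ring
          _ ≤ ε * 1 := mul_le_mul_of_nonneg_left h8 hε.le
          _ = ε := mul_one ε
    
lemma stepFun_tendsto_L1 (hp : 1 < p) (hab : a < b)
    (hM : ∀ S ∈ varSumsA p (1-1/p) f (Set.Icc a b), S ≤ M) :
    Filter.Tendsto (fun n => eLpNorm (stepFun f a b n - limDeriv f a b) 1
      (volume.restrict (Set.Icc a b))) Filter.atTop (nhds 0) := by
  have hp0 : (0:ℝ) < p := lt_trans one_pos hp
  haveI := restrict_finite (a := a) (b := b)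
  have hple : (1:ℝ≥0∞) ≤ ENNReal.ofReal p := by
    rw [← ENNReal.ofReal_one]
    exact ENNReal.ofReal_le_ofReal hp.le
  exact MeasureTheory.tendsto_Lp_finite_of_tendsto_ae le_rfl ENNReal.one_ne_top
    (fun n => stepFun_measurable.aestronglyMeasurable)
    ((limDeriv_memLp hp hab hM).mono_exponent hple)
    (stepFun_unifIntegrable hp hab hM)
    (limDeriv_ae_tendsto hp hab hM)

lemma limDeriv_integrableOn (hp : 1 < p) (hab : a < b)
    (hM : ∀ S ∈ varSumsA p (1-1/p) f (Set.Icc a b), S ≤ M) :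
    IntegrableOn (limDeriv f a b) (Set.Icc a b) volume := by
  have hp0 : (0:ℝ) < p := lt_trans one_pos hp
  haveI := restrict_finite (a := a) (b := b)
  have hple : (1:ℝ≥0∞) ≤ ENNReal.ofReal p := by
    rw [← ENNReal.ofReal_one]
    exact ENNReal.ofReal_le_ofReal hp.le
  exact MeasureTheory.memLp_one_iff_integrable.1
    ((limDeriv_memLp hp hab hM).mono_exponent hple)

lemma stepFun_integrable (n : ℕ) : Integrable (stepFun f a b n) volume := by
  apply MeasureTheory.integrable_finset_sum
  intro k _
  rw [MeasureTheory.integrable_indicator_iff measurableSet_Ico]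
  exact MeasureTheory.integrableOn_const (by rw [Real.volume_Ico]; exact ENNReal.ofReal_ne_top)

lemma integral_tendsto (hp : 1 < p) (hab : a < b)
    (hM : ∀ S ∈ varSumsA p (1-1/p) f (Set.Icc a b), S ≤ M)
    {x : ℝ} (hx : x ∈ Set.Icc a b) :
    Filter.Tendsto (fun n => ∫ t in a..x, stepFun f a b n t) Filter.atTop
      (nhds (∫ t in a..x, limDeriv f a b t)) := by
  set μ := volume.restrict (Set.Icc a b) with hμ
  have hgi : IntegrableOn (limDeriv f a b) (Set.Icc a b) volume := limDeriv_integrableOn hp hab hM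
  have hsub : Set.Ioc a x ⊆ Set.Icc a b := fun y hy => ⟨hy.1.le, le_trans hy.2 hx.2⟩
  have hgi' : IntegrableOn (limDeriv f a b) (Set.Ioc a x) volume := hgi.mono_set hsub
  have hbound : ∀ n, dist (∫ t in a..x, stepFun f a b n t) (∫ t in a..x, limDeriv f a b t)
      ≤ (eLpNorm (stepFun f a b n - limDeriv f a b) 1 μ).toReal := by
    intro n
    have hsi : IntegrableOn (stepFun f a b n) (Set.Ioc a x) volume :=
      (stepFun_integrable n).integrableOn
    rw [Real.dist_eq, intervalIntegral.integral_of_le hx.1, intervalIntegral.integral_of_le hx.1,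
      ← MeasureTheory.integral_sub hsi hgi']
    have hdi : IntegrableOn (fun t => stepFun f a b n t - limDeriv f a b t)
        (Set.Icc a b) volume := ((stepFun_integrable n).integrableOn).sub hgi
    calc |∫ t in Set.Ioc a x, (stepFun f a b n t - limDeriv f a b t) ∂volume|
        ≤ ∫ t in Set.Ioc a x, |stepFun f a b n t - limDeriv f a b t| ∂volume := by
          simpa [Real.norm_eq_abs] using
            MeasureTheory.norm_integral_le_integral_norm
              (μ := volume.restrict (Set.Ioc a x))
              (f := fun t => stepFun f a b n t - limDeriv f a b t)
      _ ≤ ∫ t in Set.Icc a b, |stepFun f a b n t - limDeriv f a b t| ∂volume := by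
          apply MeasureTheory.setIntegral_mono_set hdi.abs
          · exact Filter.Eventually.of_forall (fun t => abs_nonneg _)
          · exact Filter.Eventually.of_forall hsub
      _ = (eLpNorm (stepFun f a b n - limDeriv f a b) 1 μ).toReal := by
          rw [MeasureTheory.eLpNorm_one_eq_lintegral_enorm]
          have hint : Integrable (stepFun f a b n - limDeriv f a b) μ := hdi
          rw [← MeasureTheory.ofReal_integral_norm_eq_lintegral_enorm hint,
            ENNReal.toReal_ofReal (MeasureTheory.integral_nonneg (fun t => norm_nonneg _))]
          simp only [Pi.sub_apply, Real.norm_eq_abs]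
          rfl
  have htd : Filter.Tendsto
      (fun n => (eLpNorm (stepFun f a b n - limDeriv f a b) 1 μ).toReal)
      Filter.atTop (nhds 0) := by
    have := (ENNReal.tendsto_toReal (ENNReal.zero_ne_top)).comp (stepFun_tendsto_L1 hp hab hM)
    exact this
  rw [tendsto_iff_dist_tendsto_zero]
  exact squeeze_zero (fun n => dist_nonneg) hbound htd

end aux6
section aux7
variable {p a b M : ℝ} {f : ℝ → ℝ}

lemma step_piece_integral (hab : a < b) {n k : ℕ} (hk : k ≤ n) :
    ∫ t in (gridPt a b n k)..(gridPt a b n (k+1)), stepFun f a b n t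
      = f (gridPt a b n (k+1)) - f (gridPt a b n k) := by
  have hpos := hstep_pos hab n
  have hle : gridPt a b n k ≤ gridPt a b n (k+1) :=
    (gridPt_strictMono hab (Nat.lt_succ_self k)).le
  rw [intervalIntegral.integral_of_le hle]
  have h0 : ∀ᵐ t ∂volume, t ∈ Set.Ioc (gridPt a b n k) (gridPt a b n (k+1)) →
      stepFun f a b n t = (f (gridPt a b n (k+1)) - f (gridPt a b n k)) / ((b-a)/(n+1)) := by
    have h1 : ∀ᵐ t : ℝ ∂volume, t ≠ gridPt a b n (k+1) := by
      rw [MeasureTheory.ae_iff]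
      simp only [not_not, Set.setOf_eq_eq_singleton]
      exact Real.volume_singleton
    filter_upwards [h1] with t ht hmem
    exact stepFun_eval hab hk ⟨hmem.1.le, lt_of_le_of_ne hmem.2 ht⟩
  rw [MeasureTheory.setIntegral_congr_ae measurableSet_Ioc h0,
    MeasureTheory.setIntegral_const, Real.volume_real_Ioc_of_le hle, gridPt_succ_sub,
    smul_eq_mul]
  rw [mul_comm, div_mul_cancel₀ _ hpos.ne']

lemma ftc_grid (hab : a < b) {n j : ℕ} (hj : j ≤ n+1) :
    ∫ t in a..(gridPt a b n j), stepFun f a b n t = f (gridPt a b n j) - f a := by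
  have hint : ∀ k < j, IntervalIntegrable (stepFun f a b n) volume
      (gridPt a b n k) (gridPt a b n (k+1)) :=
    fun k _ => (stepFun_integrable n).intervalIntegrable
  have hsum := intervalIntegral.sum_integral_adjacent_intervals hint
  rw [gridPt_zero] at hsum
  rw [← hsum]
  have hcong : ∀ k ∈ Finset.range j,
      (∫ t in (gridPt a b n k)..(gridPt a b n (k+1)), stepFun f a b n t)
        = f (gridPt a b n (k+1)) - f (gridPt a b n k) := by
    intro k hk
    rw [Finset.mem_range] at hk
    exact step_piece_integral hab (by omega)
  rw [Finset.sum_congr rfl hcong, Finset.sum_range_sub (fun k => f (gridPt a b n k)) j,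
    gridPt_zero]

lemma grid_coincide (hab : a < b) {N j : ℕ} (hN : 1 ≤ N) (hj : j ≤ N) (m : ℕ) :
    gridPt a b ((m+1)*N - 1) (j*(m+1)) = a + j * ((b-a)/N) := by
  have hNn : ((m+1)*N - 1 : ℕ) + 1 = (m+1)*N := by
    have : 1 ≤ (m+1)*N := Nat.one_le_iff_ne_zero.2 (by positivity)
    omega
  have hcast : (((m+1)*N - 1 : ℕ) : ℝ) + 1 = ((m:ℝ)+1) * N := by
    have := congrArg (fun x : ℕ => (x:ℝ)) hNn
    push_cast at this
    linarith
  simp only [gridPt, hcast]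
  have hN0 : ((N:ℝ)) ≠ 0 := by
    have : (1:ℝ) ≤ N := by exact_mod_cast hN
    linarith
  have hm0 : ((m:ℝ)+1) ≠ 0 := by positivity
  push_cast
  field_simp

lemma ftc_on_grid_pts (hp : 1 < p) (hab : a < b)
    (hM : ∀ S ∈ varSumsA p (1-1/p) f (Set.Icc a b), S ≤ M)
    {N j : ℕ} (hN : 1 ≤ N) (hj : j ≤ N) :
    f (a + j * ((b-a)/N)) = f a + ∫ t in a..(a + j * ((b-a)/N)), limDeriv f a b t := by
  set x := a + (j:ℝ) * ((b-a)/N) with hxdef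
  have hN0 : (0:ℝ) < N := by exact_mod_cast hN
  have hx : x ∈ Set.Icc a b := by
    constructor
    · rw [hxdef]
      have : (0:ℝ) ≤ (j:ℝ) * ((b-a)/N) :=
        mul_nonneg (Nat.cast_nonneg j) (div_nonneg (by linarith) hN0.le)
      linarith
    · rw [hxdef]
      have hjN : (j:ℝ) ≤ N := by exact_mod_cast hj
      have h1 : (j:ℝ) * ((b-a)/N) ≤ N * ((b-a)/N) :=
        mul_le_mul_of_nonneg_right hjN (div_nonneg (by linarith) hN0.le)
      have h2 : (N:ℝ) * ((b-a)/N) = b - a := by field_simp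
      linarith
  have hmono : Filter.Tendsto (fun m : ℕ => (m+1)*N - 1) Filter.atTop Filter.atTop := by
    apply Filter.tendsto_atTop_mono (f := id) _ Filter.tendsto_id
    intro m
    have h1 : (m+1) * 1 ≤ (m+1) * N := Nat.mul_le_mul_left (m+1) hN
    simp only [id]
    omega
  have hconst : ∀ m : ℕ, ∫ t in a..x, stepFun f a b ((m+1)*N - 1) t = f x - f a := by
    intro m
    have hx_grid : x = gridPt a b ((m+1)*N - 1) (j*(m+1)) := (grid_coincide hab hN hj m).symm
    rw [hx_grid]
    apply ftc_grid hab
    have h1 : j * (m+1) ≤ N * (m+1) := Nat.mul_le_mul_right (m+1) hj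
    have : 1 ≤ (m+1)*N := Nat.one_le_iff_ne_zero.2 (by positivity)
    have h2 : (m+1) * N = N * (m+1) := Nat.mul_comm _ _
    omega
  have h2' : Filter.Tendsto (fun m : ℕ => ∫ t in a..x, stepFun f a b ((m+1)*N - 1) t)
      Filter.atTop (nhds (∫ t in a..x, limDeriv f a b t)) :=
    (integral_tendsto hp hab hM hx).comp hmono
  have h3 : Filter.Tendsto (fun _ : ℕ => f x - f a) Filter.atTop
      (nhds (∫ t in a..x, limDeriv f a b t)) :=
    Filter.Tendsto.congr (fun m => hconst m) h2'
  have h4 := tendsto_nhds_unique h3 tendsto_const_nhds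
  linarith

lemma ftc_all (hp : 1 < p) (hab : a < b)
    (hM : ∀ S ∈ varSumsA p (1-1/p) f (Set.Icc a b), S ≤ M) :
    ∀ x ∈ Set.Icc a b, f x = f a + ∫ t in a..x, limDeriv f a b t := by
  intro x hx
  rcases eq_or_lt_of_le hx.2 with rfl | hxb
  · have e : a + ((1:ℕ):ℝ) * ((x - a)/((1:ℕ):ℝ)) = x := by push_cast; ring
    have := ftc_on_grid_pts (b := x) hp hab hM (le_refl 1) (le_refl 1)
    rw [e] at this
    exact this
  · -- x < b
    set F : ℝ → ℝ := fun y => ∫ t in Set.Ioc a y, limDeriv f a b t ∂volume with hF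
    have hIoc : ∀ y ∈ Set.Icc a b, (∫ t in a..y, limDeriv f a b t) = F y := by
      intro y hy
      rw [intervalIntegral.integral_of_le hy.1]
    have hcontf := cont_on hp hab.le hM
    have hcontF : ContinuousOn F (Set.Icc a b) :=
      intervalIntegral.continuousOn_primitive (limDeriv_integrableOn hp hab hM)
    choose k hk hxcell using fun m => cell_exists hab ⟨hx.1, hxb⟩ m
    set y : ℕ → ℝ := fun m => gridPt a b m (k m) with hy
    have hymem : ∀ m, y m ∈ Set.Icc a b := fun m => gridPt_mem hab (by have := hk m; omega)
    have hyx : Filter.Tendsto y Filter.atTop (nhds x) := by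
      rw [tendsto_iff_dist_tendsto_zero]
      have hbound : ∀ m, dist (y m) x ≤ (b-a)/(m+1) := by
        intro m
        have h1 := (hxcell m).1
        have h2 := (hxcell m).2
        have h3 : gridPt a b m (k m + 1) = y m + (b-a)/(m+1) := by
          have := gridPt_succ_sub (a := a) (b := b) (n := m) (k m)
          linarith
        rw [Real.dist_eq, abs_of_nonpos (by linarith : y m - x ≤ 0)]
        rw [h3] at h2
        linarith
      have hzero : Filter.Tendsto (fun m : ℕ => (b-a)/(m+1)) Filter.atTop (nhds 0) := by
        have h1 : Filter.Tendsto (fun m : ℕ => (b-a) * (1/((m:ℝ)+1))) Filter.atTop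
            (nhds ((b-a) * 0)) :=
          Filter.Tendsto.const_mul _ tendsto_one_div_add_atTop_nhds_zero_nat
        rw [mul_zero] at h1
        apply h1.congr
        intro m
        ring
      exact squeeze_zero (fun m => dist_nonneg) hbound hzero
    have hφ0 : ∀ m, f (y m) = f a + F (y m) := by
      intro m
      have e2 : y m = a + ((k m : ℕ):ℝ) * ((b-a)/((m:ℝ)+1)) := by
        simp only [hy, gridPt]
      have h1 := ftc_on_grid_pts hp hab hM (N := m+1) (j := k m)
        (by omega) (by have := hk m; omega)
      have e3 : ((m+1:ℕ):ℝ) = (m:ℝ)+1 := by push_cast; ring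
      rw [e3] at h1
      rw [← hIoc (y m) (hymem m), e2]
      exact h1
    have htendF : Filter.Tendsto (fun m => f a + F (y m)) Filter.atTop (nhds (f a + F x)) := by
      apply Filter.Tendsto.const_add
      apply ((hcontF x hx).tendsto).comp
      rw [tendsto_nhdsWithin_iff]
      exact ⟨hyx, Filter.Eventually.of_forall hymem⟩
    have htendf : Filter.Tendsto (fun m => f (y m)) Filter.atTop (nhds (f x)) := by
      apply ((hcontf x hx).tendsto).comp
      rw [tendsto_nhdsWithin_iff]
      exact ⟨hyx, Filter.Eventually.of_forall hymem⟩
    have := tendsto_nhds_unique htendf (Filter.Tendsto.congr (fun m => (hφ0 m).symm) htendF)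
    rw [hIoc x hx]
    exact this

end aux7
section aux8
variable {p a b : ℝ} {f : ℝ → ℝ}

lemma forward_dir (hp : 1 < p) (hab : a < b) (g : ℝ → ℝ)
    (hg : MemLp g (ENNReal.ofReal p) (volume.restrict (Set.Icc a b)))
    (hfg : ∀ x ∈ Set.Icc a b, f x = f a + ∫ t in a..x, g t) :
    BddAbove (varSumsA p (1 - 1/p) f (Set.Icc a b)) := by
  have hp0 : (0:ℝ) < p := lt_trans one_pos hp
  have hq : Real.HolderConjugate p (p / (p-1)) := Real.HolderConjugate.conjExponent hp
  set q := p / (p - 1) with hqdef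
  haveI := restrict_finite (a := a) (b := b)
  set μ := volume.restrict (Set.Icc a b) with hμ
  set T := ∫⁻ x in Set.Icc a b, (‖g x‖₊ : ℝ≥0∞) ^ p ∂volume with hT
  have hne0 : ENNReal.ofReal p ≠ 0 := by
    simp [ENNReal.ofReal_eq_zero]; linarith
  have hTlt : T < ⊤ := by
    have h1 := hg.2
    rw [MeasureTheory.eLpNorm_eq_lintegral_rpow_enorm_toReal hne0 ENNReal.ofReal_ne_top,
      ENNReal.toReal_ofReal hp0.le] at h1
    rw [ENNReal.rpow_lt_top_iff_of_pos (by positivity : (0:ℝ) < 1/p)] at h1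
    exact h1
  have hple : (1:ℝ≥0∞) ≤ ENNReal.ofReal p := by
    rw [← ENNReal.ofReal_one]
    exact ENNReal.ofReal_le_ofReal hp.le
  have hint : IntegrableOn g (Set.Icc a b) volume :=
    MeasureTheory.memLp_one_iff_integrable.1 (hg.mono_exponent hple)
  refine ⟨(T.toReal) ^ (1/p), ?_⟩
  rintro S ⟨N, t, ht, hst, rfl⟩
  -- monotonicity of the partition
  have tmono : ∀ j ≤ N, ∀ i ≤ j, t i ≤ t j := by
    intro j
    induction j with
    | zero => intro _ i hi; interval_cases i; exact le_refl _
    | succ j ihj =>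
      intro hjN i hi
      rcases Nat.eq_or_lt_of_le hi with rfl | hlt
      · exact le_refl _
      · exact le_trans (ihj (by omega) i (by omega)) (hst j (by omega)).le
  set I : ℕ → ℝ≥0∞ := fun k => ∫⁻ x in Set.Ioc (t k) (t (k+1)), (‖g x‖₊ : ℝ≥0∞) ^ p ∂volume
    with hI
  have hIsub : ∀ k < N, Set.Ioc (t k) (t (k+1)) ⊆ Set.Icc a b := by
    intro k hk y hy
    exact ⟨le_trans (ht k (by omega)).1 hy.1.le, le_trans hy.2 (ht (k+1) (by omega)).2⟩
  have hIle : ∀ k < N, I k ≤ T := fun k hk =>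
    MeasureTheory.lintegral_mono_set (hIsub k hk)
  have hsum_eq : ∀ j ≤ N, ∑ k ∈ Finset.range j, I k
      = ∫⁻ x in Set.Ioc (t 0) (t j), (‖g x‖₊ : ℝ≥0∞) ^ p ∂volume := by
    intro j
    induction j with
    | zero => intro _; simp
    | succ j ihj =>
      intro hjN
      rw [Finset.sum_range_succ, ihj (by omega)]
      rw [← MeasureTheory.lintegral_union measurableSet_Ioc (Set.Ioc_disjoint_Ioc_of_le le_rfl),
        Set.Ioc_union_Ioc_eq_Ioc (tmono j (by omega) 0 (Nat.zero_le j)) (hst j (by omega)).le]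
  have hsumT : ∑ k ∈ Finset.range N, I k ≤ T := by
    rw [hsum_eq N le_rfl]
    apply MeasureTheory.lintegral_mono_set
    intro y hy
    exact ⟨le_trans (ht 0 (Nat.zero_le N)).1 hy.1.le, le_trans hy.2 (ht N le_rfl).2⟩
  -- term bound
  have hterm : ∀ k ∈ Finset.range N,
      |f (t (k+1)) - f (t k)| ^ p / (t (k+1) - t k) ^ ((1 - 1/p) * p) ≤ (I k).toReal := by
    intro k hkr
    rw [Finset.mem_range] at hkr
    set u := t k with hu
    set v := t (k+1) with hv
    have huv : u < v := hst k hkr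
    have humem : u ∈ Set.Icc a b := ht k (by omega)
    have hvmem : v ∈ Set.Icc a b := ht (k+1) (by omega)
    have hII : ∀ c d : ℝ, c ∈ Set.Icc a b → d ∈ Set.Icc a b → c ≤ d →
        IntervalIntegrable g volume c d := by
      intro c d hc hd hcd
      apply MeasureTheory.IntegrableOn.intervalIntegrable
      rw [Set.uIcc_of_le hcd]
      exact hint.mono_set (fun y hy => ⟨le_trans hc.1 hy.1, le_trans hy.2 hd.2⟩)
    have hdf : f v - f u = ∫ x in u..v, g x := by
      have h1 := hfg u humem
      have h2 := hfg v hvmem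
      have hadd := intervalIntegral.integral_add_adjacent_intervals
        (hII a u ⟨le_refl a, hab.le⟩ humem humem.1)
        (hII u v humem hvmem huv.le)
      rw [h1, h2]
      linarith
    have hrsub : Set.Ioc u v ⊆ Set.Icc a b := hIsub k hkr
    have hrestrict : volume.restrict (Set.Ioc u v) = μ.restrict (Set.Ioc u v) := by
      rw [hμ, MeasureTheory.Measure.restrict_restrict measurableSet_Ioc,
        Set.inter_eq_self_of_subset_left hrsub]
    have hgm' : AEStronglyMeasurable g (volume.restrict (Set.Ioc u v)) := by
      rw [hrestrict]
      exact hg.1.restrict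
    set A := ∫⁻ x in Set.Ioc u v, (‖g x‖₊ : ℝ≥0∞) ∂volume with hA
    have habs : |f v - f u| ≤ A.toReal := by
      rw [hdf, intervalIntegral.integral_of_le huv.le]
      have := MeasureTheory.norm_integral_le_lintegral_norm
        (μ := volume.restrict (Set.Ioc u v)) g
      rw [Real.norm_eq_abs] at this
      apply le_trans this
      apply le_of_eq
      congr 1
      apply MeasureTheory.lintegral_congr
      intro x
      exact ENNReal.ofReal_eq_coe_nnreal (norm_nonneg _)
    have hHolder : A ≤ (I k) ^ (1/p) * (ENNReal.ofReal (v - u)) ^ (1/q) := by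
      have h0 := ENNReal.lintegral_mul_le_Lp_mul_Lq (volume.restrict (Set.Ioc u v)) hq
        (hgm'.aemeasurable.enorm) (aemeasurable_const (b := (1:ℝ≥0∞)))
      simp only [Pi.mul_apply, mul_one, ENNReal.one_rpow] at h0
      rw [MeasureTheory.lintegral_one, Measure.restrict_apply_univ, Real.volume_Ioc] at h0
      exact h0
    have hIkne : I k ≠ ⊤ := (lt_of_le_of_lt (hIle k hkr) hTlt).ne
    have hRne : (I k) ^ (1/p) * (ENNReal.ofReal (v - u)) ^ (1/q) ≠ ⊤ := by
      apply ENNReal.mul_ne_top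
      · exact (ENNReal.rpow_lt_top_of_nonneg (by positivity) hIkne).ne
      · exact (ENNReal.rpow_lt_top_of_nonneg (le_of_lt (one_div_pos.2 hq.symm.pos))
          ENNReal.ofReal_ne_top).ne
    have hAR : A.toReal ≤ (I k).toReal ^ (1/p) * (v - u) ^ (1/q) := by
      have h1 := ENNReal.toReal_mono hRne hHolder
      rw [ENNReal.toReal_mul, ← ENNReal.toReal_rpow, ← ENNReal.toReal_rpow,
        ENNReal.toReal_ofReal (by linarith : (0:ℝ) ≤ v - u)] at h1
      exact h1
    have hD : (0:ℝ) < v - u := by linarith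
    have hexp : q⁻¹ * p = (1 - 1/p) * p := by
      rw [hqdef]
      field_simp
    have hfinal : |f v - f u| ^ p ≤ (I k).toReal * (v - u) ^ ((1 - 1/p) * p) := by
      calc |f v - f u| ^ p ≤ ((I k).toReal ^ (1/p) * (v - u) ^ (1/q)) ^ p := by
            apply Real.rpow_le_rpow (abs_nonneg _) (le_trans habs hAR) hp0.le
        _ = (I k).toReal * (v - u) ^ ((1 - 1/p) * p) := by
            rw [Real.mul_rpow (Real.rpow_nonneg ENNReal.toReal_nonneg _)
              (Real.rpow_nonneg hD.le _), ← Real.rpow_mul ENNReal.toReal_nonneg,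
              ← Real.rpow_mul hD.le, one_div_mul_cancel hp0.ne', Real.rpow_one]
            rw [one_div, hexp]
    rw [div_le_iff₀ (Real.rpow_pos_of_pos hD _)]
    exact hfinal
  -- combine
  have hsum_le : ∑ k ∈ Finset.range N,
      |f (t (k+1)) - f (t k)| ^ p / (t (k+1) - t k) ^ ((1 - 1/p) * p) ≤ T.toReal := by
    calc ∑ k ∈ Finset.range N,
        |f (t (k+1)) - f (t k)| ^ p / (t (k+1) - t k) ^ ((1 - 1/p) * p)
        ≤ ∑ k ∈ Finset.range N, (I k).toReal := Finset.sum_le_sum hterm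
      _ = (∑ k ∈ Finset.range N, I k).toReal :=
          (ENNReal.toReal_sum (fun k hk =>
            (lt_of_le_of_lt (hIle k (Finset.mem_range.1 hk)) hTlt).ne)).symm
      _ ≤ T.toReal := ENNReal.toReal_mono hTlt.ne hsumT
  apply Real.rpow_le_rpow _ hsum_le (by positivity)
  apply Finset.sum_nonneg
  intro k hk
  have hd : (0:ℝ) < t (k+1) - t k := sub_pos.2 (hst k (Finset.mem_range.1 hk))
  exact div_nonneg (Real.rpow_nonneg (abs_nonneg _) _) (Real.rpow_pos_of_pos hd _).le

end aux8

/-- Riesz characterization: for `1 < p < ∞`, a function belongs to `W^{1,p}([a,b])`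
(i.e. it is the primitive of an `L^p` function) iff it has bounded p-variation of
order `1 - 1/p`. -/
theorem stmt16 (p : ℝ) (hp : 1 < p) (a b : ℝ) (hab : a < b) (f : ℝ → ℝ) :
    (∃ g : ℝ → ℝ, MemLp g (ENNReal.ofReal p) (volume.restrict (Set.Icc a b)) ∧
        ∀ x ∈ Set.Icc a b, f x = f a + ∫ t in a..x, g t) ↔
      BddAbove (varSumsA p (1 - 1 / p) f (Set.Icc a b)) := by
  constructor
  · rintro ⟨g, hg, hfg⟩
    exact forward_dir hp hab g hg hfg
  · intro hbdd
    obtain ⟨M, hM⟩ := hbdd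
    exact ⟨limDeriv f a b, limDeriv_memLp hp hab (fun S hS => hM hS),
      ftc_all hp hab (fun S hS => hM hS)⟩
end
end

section
/- Let p ∈ [1,∞). For every f of bounded p-variation on ℝ, ‖f‖_{𝒰_p(ℝ)} ≤ 2^{1/p} ‖f‖_{𝒱_p(ℝ)}; i.e., sup_{t>0} t^{-1} ∫_ℝ sup_{|h|≤t} |f(x+h)-f(x)|^p dx ≤ 2 ν_p(f)^p, hence 𝒱_p(ℝ) embeds continuously into 𝒰_p(ℝ). -/
open Set Finset MeasureTheory Real
open scoped ENNReal NNReal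

noncomputable section

section Aux

variable {p : ℝ} {f : ℝ → ℝ}

lemma zero_mem_varSums_s18 (hp : 1 ≤ p) : (0:ℝ) ∈ varSums p f Set.univ := by
  have hp0 : 0 < p := lt_of_lt_of_le one_pos hp
  refine ⟨0, fun _ => 0, fun _ _ => Set.mem_univ _, fun k hk => absurd hk (Nat.not_lt_zero k), ?_⟩
  rw [Finset.sum_range_zero, Real.zero_rpow (one_div_ne_zero hp0.ne')]

lemma nuVar_nonneg (hp : 1 ≤ p) (hf : BddAbove (varSums p f Set.univ)) :
    0 ≤ nuVar p f Set.univ :=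
  le_csSup hf (zero_mem_varSums_s18 hp)

lemma sum_le_nuVar_pow (hp : 1 ≤ p) (hf : BddAbove (varSums p f Set.univ))
    (N : ℕ) (u : ℕ → ℝ) (hu : ∀ k < N, u k < u (k + 1)) :
    ∑ k ∈ Finset.range N, |f (u (k + 1)) - f (u k)| ^ p ≤ nuVar p f Set.univ ^ p := by
  have hp0 : 0 < p := lt_of_lt_of_le one_pos hp
  set S := ∑ k ∈ Finset.range N, |f (u (k + 1)) - f (u k)| ^ p with hS
  have hS0 : 0 ≤ S := Finset.sum_nonneg fun k _ => Real.rpow_nonneg (abs_nonneg _) p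
  have hmem : S ^ (1/p) ∈ varSums p f Set.univ :=
    ⟨N, u, fun _ _ => Set.mem_univ _, hu, rfl⟩
  have h1 : S ^ (1/p) ≤ nuVar p f Set.univ := le_csSup hf hmem
  have h2 : (S ^ (1/p)) ^ p ≤ nuVar p f Set.univ ^ p :=
    Real.rpow_le_rpow (Real.rpow_nonneg hS0 _) h1 hp0.le
  calc S = (S ^ (1/p)) ^ p := by
        rw [← Real.rpow_mul hS0, one_div_mul_cancel hp0.ne', Real.rpow_one]
    _ ≤ nuVar p f Set.univ ^ p := h2

/-- Chained pairs: given pairs `(A k, B k)` for `k` in a finite set, with `A k ≤ B k` and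
`B j ≤ A k` for `j < k`, there is a strictly increasing partition dominating the sum. -/
lemma chain_aux (hp : 1 ≤ p) (A B : ℤ → ℝ) (F : Finset ℤ) :
    (∀ k ∈ F, A k ≤ B k) → (∀ j ∈ F, ∀ k ∈ F, j < k → B j ≤ A k) →
    ∃ (N : ℕ) (u : ℕ → ℝ), (∀ k < N, u k < u (k + 1)) ∧
      (0 < N → ∃ m ∈ F, (∀ k ∈ F, k ≤ m) ∧ u N ≤ B m) ∧
      ∑ k ∈ F, |f (B k) - f (A k)| ^ p ≤
        ∑ k ∈ Finset.range N, |f (u (k + 1)) - f (u k)| ^ p := by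
  have hp0 : 0 < p := lt_of_lt_of_le one_pos hp
  induction F using Finset.induction_on_max with
  | empty =>
    intro _ _
    exact ⟨0, fun _ => 0, fun k hk => absurd hk (Nat.not_lt_zero k),
      fun h => absurd h (lt_irrefl 0), by simp⟩
  | insert a F hmax ih =>
    intro hab hchain
    have haF : a ∉ F := fun h => lt_irrefl a (hmax a h)
    obtain ⟨N, u, hu, hinv, hsum⟩ := ih (fun k hk => hab k (Finset.mem_insert_of_mem hk))
      (fun j hj k hk hjk => hchain j (Finset.mem_insert_of_mem hj) k
        (Finset.mem_insert_of_mem hk) hjk)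
    have hABa : A a ≤ B a := hab a (Finset.mem_insert_self a F)
    have htop : ∀ k ∈ insert a F, k ≤ a := by
      intro k hk
      rcases Finset.mem_insert.mp hk with rfl | hk
      · exact le_refl k
      · exact (hmax k hk).le
    rw [Finset.sum_insert haF]
    rcases eq_or_lt_of_le hABa with heq | hlt
    · -- degenerate pair : term is zero
      refine ⟨N, u, hu, ?_, ?_⟩
      · intro hN
        obtain ⟨m, hmF, _, hle⟩ := hinv hN
        have hBmAa : B m ≤ A a := hchain m (Finset.mem_insert_of_mem hmF) a
          (Finset.mem_insert_self a F) (hmax m hmF)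
        exact ⟨a, Finset.mem_insert_self a F, htop,
          le_trans hle (le_trans hBmAa heq.le)⟩
      · have hterm : |f (B a) - f (A a)| ^ p = 0 := by
          rw [← heq, sub_self, abs_zero, Real.zero_rpow hp0.ne']
        rw [hterm, zero_add]; exact hsum
    · rcases Nat.eq_zero_or_pos N with rfl | hNpos
      · -- start a fresh partition with the two points A a < B a
        refine ⟨1, fun k => if k = 0 then A a else B a, ?_, ?_, ?_⟩
        · intro k hk
          have : k = 0 := by omega
          subst this; simpa using hlt
        · intro _
          exact ⟨a, Finset.mem_insert_self a F, htop, by norm_num⟩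
        · have h0 : ∑ k ∈ F, |f (B k) - f (A k)| ^ p ≤ 0 := by simpa using hsum
          have h1 : ∑ k ∈ Finset.range 1,
              |f ((if k + 1 = 0 then A a else B a)) - f ((if k = 0 then A a else B a))| ^ p
              = |f (B a) - f (A a)| ^ p := by norm_num
          rw [h1]; linarith
      · obtain ⟨m, hmF, _, hle⟩ := hinv hNpos
        have hBmAa : B m ≤ A a := hchain m (Finset.mem_insert_of_mem hmF) a
          (Finset.mem_insert_self a F) (hmax m hmF)
        have huNa : u N ≤ A a := le_trans hle hBmAa
        rcases eq_or_lt_of_le huNa with hEq | hLt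
        · -- append just B a
          refine ⟨N + 1, fun k => if k ≤ N then u k else B a, ?_, ?_, ?_⟩
          · intro k hk
            rcases lt_or_ge k N with h | h
            · have h1 : k ≤ N := h.le
              have h2 : k + 1 ≤ N := h
              simp only [if_pos h1, if_pos h2]
              exact hu k h
            · have hkN : k = N := by omega
              subst hkN
              have h2 : ¬ (k + 1 ≤ k) := by omega
              simp only [if_pos (le_refl k), if_neg h2]
              exact lt_of_le_of_lt (le_of_eq hEq) hlt
          · intro _
            have h2 : ¬ (N + 1 ≤ N) := by omega
            exact ⟨a, Finset.mem_insert_self a F, htop, by simp only [if_neg h2]; exact le_refl _⟩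
          · rw [Finset.sum_range_succ]
            have hcong : ∑ k ∈ Finset.range N,
                |f ((if k + 1 ≤ N then u (k+1) else B a)) - f ((if k ≤ N then u k else B a))| ^ p
                = ∑ k ∈ Finset.range N, |f (u (k + 1)) - f (u k)| ^ p := by
              refine Finset.sum_congr rfl fun k hk => ?_
              have h1 : k + 1 ≤ N := Finset.mem_range.mp hk
              rw [if_pos h1, if_pos (by omega : k ≤ N)]
            have h2 : ¬ (N + 1 ≤ N) := by omega
            beta_reduce
            rw [hcong]
            simp only [if_neg h2, if_pos (le_refl N)]
            rw [hEq]
            linarith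
        · -- append both A a and B a
          refine ⟨N + 2, fun k => if k ≤ N then u k else (if k = N + 1 then A a else B a),
            ?_, ?_, ?_⟩
          · intro k hk
            rcases lt_or_ge k N with h | h
            · have h1 : k ≤ N := h.le
              have h2 : k + 1 ≤ N := h
              simp only [if_pos h1, if_pos h2]
              exact hu k h
            · rcases (by omega : k = N ∨ k = N + 1) with rfl | rfl
              · have h2 : ¬ (k + 1 ≤ k) := by omega
                simp only [if_pos (le_refl k), if_neg h2, if_pos rfl]
                exact hLt
              · have h2 : ¬ (N + 1 ≤ N) := by omega
                have h3 : ¬ (N + 1 + 1 ≤ N) := by omega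
                have h4 : ¬ (N + 1 + 1 = N + 1) := by omega
                simp only [if_neg h2, if_neg h3, if_pos rfl, if_neg h4]
                exact hlt
          · intro _
            have h3 : ¬ (N + 2 ≤ N) := by omega
            have h4 : ¬ (N + 2 = N + 1) := by omega
            exact ⟨a, Finset.mem_insert_self a F, htop,
              by simp only [if_neg h3, if_neg h4]; exact le_refl _⟩
          · rw [Finset.sum_range_succ, Finset.sum_range_succ]
            have hcong : ∑ k ∈ Finset.range N,
                |f ((if k + 1 ≤ N then u (k+1) else (if k + 1 = N + 1 then A a else B a)))
                  - f ((if k ≤ N then u k else (if k = N + 1 then A a else B a)))| ^ p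
                = ∑ k ∈ Finset.range N, |f (u (k + 1)) - f (u k)| ^ p := by
              refine Finset.sum_congr rfl fun k hk => ?_
              have h1 : k + 1 ≤ N := Finset.mem_range.mp hk
              rw [if_pos h1, if_pos (by omega : k ≤ N)]
            have h2 : ¬ (N + 1 ≤ N) := by omega
            have h3 : ¬ (N + 1 + 1 ≤ N) := by omega
            have h4 : ¬ (N + 1 + 1 = N + 1) := by omega
            beta_reduce
            rw [hcong]
            simp only [if_neg h2, if_neg h3, if_neg h4, if_pos (le_refl N),
              eq_self_iff_true, if_true]
            have hnn : 0 ≤ |f (A a) - f (u N)| ^ p := Real.rpow_nonneg (abs_nonneg _) p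
            linarith

lemma chain_le (hp : 1 ≤ p) (hf : BddAbove (varSums p f Set.univ)) (A B : ℤ → ℝ)
    (F : Finset ℤ) (hab : ∀ k ∈ F, A k ≤ B k)
    (hchain : ∀ j ∈ F, ∀ k ∈ F, j < k → B j ≤ A k) :
    ∑ k ∈ F, |f (B k) - f (A k)| ^ p ≤ nuVar p f Set.univ ^ p := by
  obtain ⟨N, u, hu, -, hsum⟩ := chain_aux hp A B F hab hchain
  exact hsum.trans (sum_le_nuVar_pow hp hf N u hu)

/-- Sum of suprema is bounded by a uniform bound over all choice functions. -/
lemma sum_iSup_le {t : ℝ} (ht : 0 < t) (φ : ℤ → ℝ → ℝ) (hφ : ∀ k h, 0 ≤ φ k h)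
    (F : Finset ℤ) :
    ∀ C : ℝ, (∀ H : ℤ → ℝ, (∀ k, H k ∈ Set.Icc (0:ℝ) t) → ∑ k ∈ F, φ k (H k) ≤ C) →
    ∑ k ∈ F, (⨆ (h : ℝ) (_ : h ∈ Set.Icc (0:ℝ) t), ENNReal.ofReal (φ k h)) ≤
      ENNReal.ofReal C := by
  induction F using Finset.induction_on with
  | empty => intro C _; simp
  | @insert a F haF ih =>
    intro C hC
    rw [Finset.sum_insert haF]
    have hne : ∃ h : ℝ, h ∈ Set.Icc (0:ℝ) t := ⟨0, le_refl 0, ht.le⟩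
    rw [ENNReal.biSup_add' hne]
    refine iSup₂_le fun h hh => ?_
    have key : ∀ H : ℤ → ℝ, (∀ k, H k ∈ Set.Icc (0:ℝ) t) →
        ∑ k ∈ F, φ k (H k) ≤ C - φ a h := by
      intro H hH
      have h1 := hC (Function.update H a h) (fun k => by
        rcases eq_or_ne k a with rfl | hk
        · simpa using hh
        · simpa [Function.update_of_ne hk] using hH k)
      rw [Finset.sum_insert haF, Function.update_self] at h1
      have heq : ∑ k ∈ F, φ k (Function.update H a h k) = ∑ k ∈ F, φ k (H k) :=
        Finset.sum_congr rfl fun k hk => by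
          rw [Function.update_of_ne (ne_of_mem_of_not_mem hk haF)]
      rw [heq] at h1
      linarith
    have hsub : 0 ≤ C - φ a h := by
      have h1 := key (fun _ => 0) (fun _ => ⟨le_refl 0, ht.le⟩)
      have h0 : (0:ℝ) ≤ ∑ k ∈ F, φ k 0 := Finset.sum_nonneg fun k _ => hφ k 0
      linarith
    calc ENNReal.ofReal (φ a h) +
          ∑ k ∈ F, (⨆ (h : ℝ) (_ : h ∈ Set.Icc (0:ℝ) t), ENNReal.ofReal (φ k h))
        ≤ ENNReal.ofReal (φ a h) + ENNReal.ofReal (C - φ a h) :=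
          add_le_add_right (ih _ key) _
      _ = ENNReal.ofReal C := by
          rw [← ENNReal.ofReal_add (hφ a h) hsub]
          congr 1
          ring

lemma finset_sum_lintegral_le {α : Type*} [MeasurableSpace α] (μ : Measure α) {ι : Type*}
    (F : Finset ι) (g : ι → α → ℝ≥0∞) :
    ∑ k ∈ F, ∫⁻ x, g k x ∂μ ≤ ∫⁻ x, ∑ k ∈ F, g k x ∂μ := by
  classical
  induction F using Finset.induction_on with
  | empty => simp
  | @insert a F haF ih =>
    rw [Finset.sum_insert haF]
    calc (∫⁻ x, g a x ∂μ) + ∑ k ∈ F, ∫⁻ x, g k x ∂μ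
        ≤ (∫⁻ x, g a x ∂μ) + ∫⁻ x, ∑ k ∈ F, g k x ∂μ := add_le_add_right ih _
      _ ≤ ∫⁻ x, (g a x + ∑ k ∈ F, g k x) ∂μ := le_lintegral_add _ _
      _ = ∫⁻ x, ∑ k ∈ insert a F, g k x ∂μ := by
          refine lintegral_congr fun x => ?_
          rw [Finset.sum_insert haF]

end Aux

/-- Embedding `𝒱_p(ℝ) ↪ 𝒰_p(ℝ)`: for every `t > 0`,
`∫ sup_{|h|≤t} |f(x+h)-f(x)|^p dx ≤ t · 2 ν_p(f)^p`. -/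
theorem stmt18 (p : ℝ) (hp : 1 ≤ p) (f : ℝ → ℝ)
    (hf : BddAbove (varSums p f Set.univ)) :
    ∀ t : ℝ, 0 < t →
      (∫⁻ x, ⨆ (h : ℝ) (_ : |h| ≤ t), ENNReal.ofReal (|f (x + h) - f x| ^ p)) ≤
        ENNReal.ofReal (t * (2 * nuVar p f Set.univ ^ p)) := by
  intro t ht
  have hp0 : 0 < p := lt_of_lt_of_le one_pos hp
  set ν := nuVar p f Set.univ with hν
  have hν0 : 0 ≤ ν := nuVar_nonneg hp hf
  have hνp : 0 ≤ ν ^ p := Real.rpow_nonneg hν0 p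
  set G : ℝ → ℝ≥0∞ :=
    fun x => ⨆ (h : ℝ) (_ : |h| ≤ t), ENNReal.ofReal (|f (x + h) - f x| ^ p) with hG
  -- pointwise key estimate
  have key : ∀ (x : ℝ) (F : Finset ℤ),
      ∑ k ∈ F, G (x + (k:ℝ) * t) ≤ ENNReal.ofReal (2 * ν ^ p) := by
    intro x F
    set φA : ℤ → ℝ → ℝ := fun k h => |f (x + (k:ℝ)*t + h) - f (x + (k:ℝ)*t)| ^ p with hφA
    set φB : ℤ → ℝ → ℝ := fun k h => |f (x + (k:ℝ)*t - h) - f (x + (k:ℝ)*t)| ^ p with hφB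
    have hφA0 : ∀ k h, 0 ≤ φA k h := fun k h => Real.rpow_nonneg (abs_nonneg _) p
    have hφB0 : ∀ k h, 0 ≤ φB k h := fun k h => Real.rpow_nonneg (abs_nonneg _) p
    have hGle : ∀ k : ℤ, G (x + (k:ℝ)*t) ≤
        (⨆ (h : ℝ) (_ : h ∈ Set.Icc (0:ℝ) t), ENNReal.ofReal (φA k h)) +
        (⨆ (h : ℝ) (_ : h ∈ Set.Icc (0:ℝ) t), ENNReal.ofReal (φB k h)) := by
      intro k
      rw [hG]
      refine iSup₂_le fun h hh => ?_
      rcases le_or_gt 0 h with h0 | h0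
      · refine le_trans ?_ le_self_add
        exact le_iSup₂_of_le h ⟨h0, (abs_le.mp hh).2⟩ (le_refl _)
      · refine le_trans ?_ le_add_self
        refine le_iSup₂_of_le (-h) ⟨by linarith, by linarith [(abs_le.mp hh).1]⟩ ?_
        rw [hφB]
        simp only [sub_neg_eq_add]
        exact le_refl _
    have hAbound : ∀ H : ℤ → ℝ, (∀ k, H k ∈ Set.Icc (0:ℝ) t) →
        ∑ k ∈ F, φA k (H k) ≤ ν ^ p := by
      intro H hH
      have := chain_le hp hf (fun k => x + (k:ℝ)*t) (fun k => x + (k:ℝ)*t + H k) F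
        (fun k _ => by linarith [(hH k).1])
        (fun j _ k _ hjk => by
          have hj1 : (j:ℝ) + 1 ≤ (k:ℝ) := by exact_mod_cast Int.add_one_le_iff.mpr hjk
          have h2 := (hH j).2
          nlinarith)
      exact this
    have hBbound : ∀ H : ℤ → ℝ, (∀ k, H k ∈ Set.Icc (0:ℝ) t) →
        ∑ k ∈ F, φB k (H k) ≤ ν ^ p := by
      intro H hH
      have h1 := chain_le hp hf (fun k => x + (k:ℝ)*t - H k) (fun k => x + (k:ℝ)*t) F
        (fun k _ => by linarith [(hH k).1])
        (fun j _ k _ hjk => by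
          have hj1 : (j:ℝ) + 1 ≤ (k:ℝ) := by exact_mod_cast Int.add_one_le_iff.mpr hjk
          have h2 := (hH k).2
          nlinarith)
      have heq : ∑ k ∈ F, φB k (H k) =
          ∑ k ∈ F, |f (x + (k:ℝ)*t) - f (x + (k:ℝ)*t - H k)| ^ p :=
        Finset.sum_congr rfl fun k _ => by rw [hφB]; rw [abs_sub_comm]
      rw [heq]
      exact h1
    calc ∑ k ∈ F, G (x + (k:ℝ)*t)
        ≤ ∑ k ∈ F, ((⨆ (h : ℝ) (_ : h ∈ Set.Icc (0:ℝ) t), ENNReal.ofReal (φA k h)) +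
            (⨆ (h : ℝ) (_ : h ∈ Set.Icc (0:ℝ) t), ENNReal.ofReal (φB k h))) :=
          Finset.sum_le_sum fun k _ => hGle k
      _ = (∑ k ∈ F, ⨆ (h : ℝ) (_ : h ∈ Set.Icc (0:ℝ) t), ENNReal.ofReal (φA k h)) +
          (∑ k ∈ F, ⨆ (h : ℝ) (_ : h ∈ Set.Icc (0:ℝ) t), ENNReal.ofReal (φB k h)) :=
          Finset.sum_add_distrib
      _ ≤ ENNReal.ofReal (ν ^ p) + ENNReal.ofReal (ν ^ p) :=
          add_le_add (sum_iSup_le ht φA hφA0 F _ hAbound) (sum_iSup_le ht φB hφB0 F _ hBbound)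
      _ = ENNReal.ofReal (2 * ν ^ p) := by
          rw [← ENNReal.ofReal_add hνp hνp]; congr 1; ring
  -- covering of ℝ by the intervals [k t, k t + t)
  have hdisj : Pairwise (Function.onFun Disjoint fun k : ℤ => Set.Ico ((k:ℝ)*t) ((k:ℝ)*t + t)) := by
    have hlt : ∀ j k : ℤ, j < k →
        Disjoint (Set.Ico ((j:ℝ)*t) ((j:ℝ)*t + t)) (Set.Ico ((k:ℝ)*t) ((k:ℝ)*t + t)) := by
      intro j k hjk
      rw [Set.Ico_disjoint_Ico]
      have hj1 : (j:ℝ) + 1 ≤ (k:ℝ) := by exact_mod_cast Int.add_one_le_iff.mpr hjk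
      have h1 : (j:ℝ)*t + t ≤ (k:ℝ)*t := by nlinarith
      exact le_trans (le_trans (min_le_left _ _) h1) (le_max_right _ _)
    intro j k hjk
    rcases lt_or_gt_of_ne hjk with h | h
    · exact hlt j k h
    · exact (hlt k j h).symm
  have hcover : (⋃ k : ℤ, Set.Ico ((k:ℝ)*t) ((k:ℝ)*t + t)) = Set.univ := by
    ext x
    simp only [Set.mem_iUnion, Set.mem_univ, iff_true, Set.mem_Ico]
    refine ⟨⌊x/t⌋, ?_, ?_⟩
    · calc ((⌊x/t⌋:ℝ))*t ≤ (x/t)*t := mul_le_mul_of_nonneg_right (Int.floor_le _) ht.le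
        _ = x := div_mul_cancel₀ x ht.ne'
    · have h1 : x/t < ⌊x/t⌋ + 1 := Int.lt_floor_add_one _
      have h2 : x = (x/t)*t := (div_mul_cancel₀ x ht.ne').symm
      nlinarith
  have hres : (volume : Measure ℝ) =
      Measure.sum (fun k : ℤ => volume.restrict (Set.Ico ((k:ℝ)*t) ((k:ℝ)*t + t))) := by
    have h1 := Measure.restrict_iUnion (μ := (volume : Measure ℝ)) hdisj
      (fun k => measurableSet_Ico)
    rw [hcover, Measure.restrict_univ] at h1
    exact h1
  have htrans : ∀ k : ℤ, (∫⁻ x, G x ∂(volume.restrict (Set.Ico ((k:ℝ)*t) ((k:ℝ)*t + t))))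
      = ∫⁻ x in Set.Ico (0:ℝ) t, G (x + (k:ℝ)*t) := by
    intro k
    have hpre : ((fun x : ℝ => x + (k:ℝ)*t) ⁻¹' Set.Ico ((k:ℝ)*t) ((k:ℝ)*t + t))
        = Set.Ico (0:ℝ) t := by
      ext y
      simp only [Set.mem_preimage, Set.mem_Ico]
      constructor <;> intro hy <;> exact ⟨by linarith [hy.1], by linarith [hy.2]⟩
    have hmap : Measure.map (fun x : ℝ => x + (k:ℝ)*t) (volume.restrict (Set.Ico (0:ℝ) t))
        = volume.restrict (Set.Ico ((k:ℝ)*t) ((k:ℝ)*t + t)) := by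
      rw [← hpre, ← Measure.restrict_map (measurable_add_const _) measurableSet_Ico,
        map_add_right_eq_self]
    rw [← hmap, (measurableEmbedding_addRight ((k:ℝ)*t)).lintegral_map]
  calc (∫⁻ x, G x)
      = ∑' k : ℤ, ∫⁻ x, G x ∂(volume.restrict (Set.Ico ((k:ℝ)*t) ((k:ℝ)*t + t))) := by
        conv_lhs => rw [hres]
        exact lintegral_sum_measure _ _
    _ = ∑' k : ℤ, ∫⁻ x in Set.Ico (0:ℝ) t, G (x + (k:ℝ)*t) := tsum_congr htrans
    _ = ⨆ F : Finset ℤ, ∑ k ∈ F, ∫⁻ x in Set.Ico (0:ℝ) t, G (x + (k:ℝ)*t) :=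
        ENNReal.tsum_eq_iSup_sum
    _ ≤ ENNReal.ofReal (t * (2 * ν ^ p)) := by
        refine iSup_le fun F => ?_
        calc ∑ k ∈ F, ∫⁻ x in Set.Ico (0:ℝ) t, G (x + (k:ℝ)*t)
            ≤ ∫⁻ x in Set.Ico (0:ℝ) t, ∑ k ∈ F, G (x + (k:ℝ)*t) :=
              finset_sum_lintegral_le _ F _
          _ ≤ ∫⁻ _ in Set.Ico (0:ℝ) t, ENNReal.ofReal (2 * ν ^ p) :=
              lintegral_mono fun x => key x F
          _ = ENNReal.ofReal (2 * ν ^ p) * volume (Set.Ico (0:ℝ) t) :=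
              setLIntegral_const _ _
          _ = ENNReal.ofReal (t * (2 * ν ^ p)) := by
              rw [Real.volume_Ico, ← ENNReal.ofReal_mul (by linarith : (0:ℝ) ≤ 2 * ν ^ p)]
              congr 1
              ring

end
end
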